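/- arXiv:1502.02744 — 11 statements merged into one kernel-verified Lean document; each statement's English description precedes it below -/
import Mathlib

section
/- If f, defined for integers 0 ≤ m ≤ n, satisfies f(0,n) = 1 for all n, f(m,n) = Σ_{i=0}^{m} C(m, m-i) f(i, n-1) for m < n, and f(m,n) = Σ_{i=0}^{m-1} C(m, m-i) f(i, n-1) for m = n, then f(m,n) = (n-m+1)(n+1)^(m-1) for all 1 ≤ m ≤ n; in particular f(n,n) = (n+1)^(n-1). -/
lemma binom_pow_sum (N k : ℕ) :
    ∑ i ∈ Finset.range (k + 1), Nat.choose k i * N ^ i = (N + 1) ^ k := by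
  rw [add_pow]
  simp [mul_comm]

lemma mySum_deriv (N m : ℕ) :
    ∑ j ∈ Finset.range (m + 1), (j + 1) * Nat.choose (m + 1) (j + 1) * N ^ j
      = (m + 1) * (N + 1) ^ m := by
  have h : ∀ j, (j + 1) * Nat.choose (m + 1) (j + 1) * N ^ j
      = (m + 1) * (Nat.choose m j * N ^ j) := by
    intro j
    have := Nat.add_one_mul_choose_eq m j
    calc (j + 1) * Nat.choose (m + 1) (j + 1) * N ^ j
        = (Nat.choose (m + 1) (j + 1) * (j + 1)) * N ^ j := by ring
      _ = ((m + 1) * Nat.choose m j) * N ^ j := by rw [← this]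
      _ = (m + 1) * (Nat.choose m j * N ^ j) := by ring
  simp only [h, ← Finset.mul_sum, binom_pow_sum]

lemma key (N m : ℕ) (hm : 1 ≤ m) (hmN : m ≤ N) :
    1 + ∑ j ∈ Finset.range m, Nat.choose m (j + 1) * ((N - (j + 1)) * N ^ j)
      = (N + 1 - m) * (N + 1) ^ (m - 1) := by
  obtain ⟨m', rfl⟩ : ∃ m', m = m' + 1 := ⟨m - 1, by omega⟩
  apply Nat.add_right_cancel
    (m := ∑ j ∈ Finset.range (m' + 1), (j + 1) * Nat.choose (m' + 1) (j + 1) * N ^ j)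
  have h1 : ∑ j ∈ Finset.range (m' + 1), Nat.choose (m' + 1) (j + 1) * ((N - (j + 1)) * N ^ j)
      + ∑ j ∈ Finset.range (m' + 1), (j + 1) * Nat.choose (m' + 1) (j + 1) * N ^ j
      = ∑ j ∈ Finset.range (m' + 1), Nat.choose (m' + 1) (j + 1) * N ^ (j + 1) := by
    rw [← Finset.sum_add_distrib]
    apply Finset.sum_congr rfl
    intro j hj
    have hjN : j + 1 ≤ N := by
      have := Finset.mem_range.mp hj; omega
    have hx : N - (j + 1) + (j + 1) = N := by omega
    calc Nat.choose (m' + 1) (j + 1) * ((N - (j + 1)) * N ^ j)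
          + (j + 1) * Nat.choose (m' + 1) (j + 1) * N ^ j
        = Nat.choose (m' + 1) (j + 1) * ((N - (j + 1) + (j + 1)) * N ^ j) := by ring
      _ = Nat.choose (m' + 1) (j + 1) * (N * N ^ j) := by rw [hx]
      _ = Nat.choose (m' + 1) (j + 1) * N ^ (j + 1) := by rw [pow_succ, mul_comm (N ^ j) N]
  have h2 : 1 + ∑ j ∈ Finset.range (m' + 1), Nat.choose (m' + 1) (j + 1) * N ^ (j + 1)
      = (N + 1) ^ (m' + 1) := by
    have hb := binom_pow_sum N (m' + 1)
    rw [Finset.sum_range_succ'] at hb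
    simp only [Nat.choose_zero_right, pow_zero, mul_one] at hb
    rw [add_comm] at hb
    exact hb
  have h3 : (N + 1 - (m' + 1)) * (N + 1) ^ (m' + 1 - 1) + (m' + 1) * (N + 1) ^ m'
      = (N + 1) ^ (m' + 1) := by
    have : N + 1 - (m' + 1) + (m' + 1) = N + 1 := by omega
    calc (N + 1 - (m' + 1)) * (N + 1) ^ m' + (m' + 1) * (N + 1) ^ m'
        = (N + 1 - (m' + 1) + (m' + 1)) * (N + 1) ^ m' := by ring
      _ = (N + 1) * (N + 1) ^ m' := by rw [this]
      _ = (N + 1) ^ (m' + 1) := by rw [pow_succ, mul_comm]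
  rw [add_assoc, h1, h2, mySum_deriv, h3]

theorem f_recurrence_closed_form (f : ℕ → ℕ → ℕ)
    (h0 : ∀ n, f 0 n = 1)
    (hlt : ∀ m n, 1 ≤ m → m < n →
      f m n = ∑ i ∈ Finset.range (m + 1), Nat.choose m (m - i) * f i (n - 1))
    (heq : ∀ n, 1 ≤ n →
      f n n = ∑ i ∈ Finset.range n, Nat.choose n (n - i) * f i (n - 1)) :
    (∀ m n, 1 ≤ m → m ≤ n → f m n = (n - m + 1) * (n + 1) ^ (m - 1)) ∧
    (∀ n, 1 ≤ n → f n n = (n + 1) ^ (n - 1)) := by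
  have main : ∀ n m, 1 ≤ m → m ≤ n → f m n = (n - m + 1) * (n + 1) ^ (m - 1) := by
    intro n
    induction n with
    | zero => intro m hm hmn; omega
    | succ n IH =>
      intro m hm hmn
      rcases lt_or_eq_of_le hmn with hlt' | rfl
      · -- m < n + 1, i.e. m ≤ n
        have hmn' : m ≤ n := by omega
        have hrec := hlt m (n + 1) hm hlt'
        simp only [Nat.add_sub_cancel] at hrec
        rw [Finset.sum_range_succ'] at hrec
        have hterms : ∀ j ∈ Finset.range m,
            Nat.choose m (m - (j + 1)) * f (j + 1) n
              = Nat.choose m (j + 1) * (((n + 1) - (j + 1)) * (n + 1) ^ j) := by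
          intro j hj
          have hjm : j + 1 ≤ m := by
            have := Finset.mem_range.mp hj; omega
          have hjn : j + 1 ≤ n := le_trans hjm hmn'
          rw [Nat.choose_symm hjm, IH (j + 1) (by omega) hjn]
          have h1 : n - (j + 1) + 1 = (n + 1) - (j + 1) := by omega
          simp [h1]
        rw [Finset.sum_congr rfl hterms] at hrec
        simp only [Nat.sub_zero, Nat.choose_self, h0, mul_one, one_mul] at hrec
        rw [hrec, add_comm, key (n + 1) m hm (by omega)]
        congr 1
        omega
      · -- m = n + 1
        have hrec := heq (n + 1) (by omega)
        simp only [Nat.add_sub_cancel] at hrec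
        rw [Finset.sum_range_succ'] at hrec
        have hterms : ∀ j ∈ Finset.range n,
            Nat.choose (n + 1) (n + 1 - (j + 1)) * f (j + 1) n
              = Nat.choose (n + 1) (j + 1) * (((n + 1) - (j + 1)) * (n + 1) ^ j) := by
          intro j hj
          have hjn : j + 1 ≤ n := by
            have := Finset.mem_range.mp hj; omega
          rw [Nat.choose_symm (by omega), IH (j + 1) (by omega) hjn]
          have h1 : n - (j + 1) + 1 = (n + 1) - (j + 1) := by omega
          simp [h1]
        rw [Finset.sum_congr rfl hterms] at hrec
        simp only [Nat.sub_zero, Nat.choose_self, h0, mul_one, one_mul] at hrec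
        have hkey := key (n + 1) (n + 1) (by omega) (le_refl _)
        rw [Finset.sum_range_succ] at hkey
        simp only [Nat.sub_self, zero_mul, mul_zero, add_zero] at hkey
        rw [hrec, add_comm, hkey]
        have h2 : n + 1 + 1 - (n + 1) = 1 := by omega
        have h3 : n + 1 - (n + 1) + 1 = 1 := by omega
        rw [h2, h3]
  refine ⟨fun m n hm hmn => main n m hm hmn, fun n hn => ?_⟩
  rw [main n n hn (le_refl n)]
  simp
end

section
/- For all natural numbers m ≤ n with m ≥ 1, Σ_{i=0}^{m} C(m,i)(n-i)n^(i-1) = (n+1-m)(n+1)^(m-1), interpreting the i = 0 term as n·n^(-1) = 1 (i.e., the sum is 1 + Σ_{i=1}^{m} C(m,i)(n-i)n^(i-1)). -/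
/-!
Writing `(x - i) x^(i-1) = x^i - i x^(i-1)` splits the sum in two. The first part is
`(x + 1)^m - 1` by the binomial theorem; the second is the derivative of `(x + 1)^m`, i.e.
`m (x + 1)^(m-1)`, by `i C(m, i) = m C(m-1, i-1)`. Hence the left side is
`(x + 1)^m - m (x + 1)^(m-1) = (x + 1 - m)(x + 1)^(m-1)`, as a polynomial identity in `x`.
-/

open Finset

theorem sum_Icc_one_eq_sum_range {M : Type*} [AddCommMonoid M] (f : ℕ → M) (m : ℕ) :
    ∑ i ∈ Icc 1 m, f i = ∑ j ∈ range m, f (j + 1) := by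
  rw [range_eq_Ico, sum_Ico_add', zero_add, Ico_add_one_right_eq_Icc]

section
variable {R : Type*} [CommSemiring R]

theorem one_add_sum_range_choose_succ_mul_pow (x : R) (m : ℕ) :
    1 + ∑ j ∈ range m, (m.choose (j + 1) : R) * x ^ (j + 1) = (x + 1) ^ m := by
  rw [add_pow, sum_range_succ']
  simp [add_comm, mul_comm]

theorem sum_range_choose_succ_mul_succ_mul_pow (x : R) (m : ℕ) :
    ∑ j ∈ range (m + 1), ((m + 1).choose (j + 1) : R) * (j + 1) * x ^ j
      = (m + 1) * (x + 1) ^ m := by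
  rw [add_pow, mul_sum]
  refine sum_congr rfl fun j _ => ?_
  have h := congrArg (Nat.cast : ℕ → R) (Nat.add_one_mul_choose_eq m j)
  push_cast at h
  rw [one_pow, mul_one, ← h]
  ring
end

theorem one_add_sum_Icc_choose_mul_sub_mul_pow {R : Type*} [CommRing R] (x : R) (m : ℕ) :
    1 + ∑ i ∈ Icc 1 (m + 1), ((m + 1).choose i : R) * (x - i) * x ^ (i - 1)
      = (x - m) * (x + 1) ^ m := by
  have hsplit : ∀ j ∈ range (m + 1),
      ((m + 1).choose (j + 1) : R) * (x - (j + 1 : ℕ)) * x ^ (j + 1 - 1)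
        = ((m + 1).choose (j + 1) : R) * x ^ (j + 1)
          - ((m + 1).choose (j + 1) : R) * (j + 1) * x ^ j := fun j _ => by
    push_cast; ring
  rw [sum_Icc_one_eq_sum_range, sum_congr rfl hsplit, sum_sub_distrib, ← add_sub_assoc,
    one_add_sum_range_choose_succ_mul_pow, sum_range_choose_succ_mul_succ_mul_pow]
  ring

theorem binom_identity_general (m n : ℕ) (hm : 1 ≤ m) :
    1 + ∑ i ∈ Finset.Icc 1 m,
      (Nat.choose m i : ℚ) * ((n : ℚ) - i) * (n : ℚ) ^ (i - 1)
    = ((n : ℚ) + 1 - m) * ((n : ℚ) + 1) ^ (m - 1) := by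
  obtain ⟨k, rfl⟩ := Nat.exists_eq_add_of_le' hm
  rw [one_add_sum_Icc_choose_mul_sub_mul_pow, Nat.add_sub_cancel]
  push_cast
  ring

theorem binom_identity (m n : ℕ) (hm : 1 ≤ m) (hmn : m ≤ n) :
    1 + ∑ i ∈ Finset.Icc 1 m,
      (Nat.choose m i : ℚ) * ((n : ℚ) - i) * (n : ℚ) ^ (i - 1)
    = ((n : ℚ) + 1 - m) * ((n : ℚ) + 1) ^ (m - 1) :=
  binom_identity_general m n hm
end

section
/- For every natural number n ≥ 1, 1 + Σ_{i=1}^{n-1} C(n, n-i)(n-i) n^(i-1) = (n+1)^(n-1). -/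
theorem binom_sum2 (n : ℕ) (hn : 1 ≤ n) :
    1 + ∑ i ∈ Finset.Icc 1 (n - 1), Nat.choose n (n - i) * (n - i) * n ^ (i - 1)
      = (n + 1) ^ (n - 1) := by
  obtain ⟨m, rfl⟩ := Nat.exists_eq_add_of_le hn
  simp only [add_comm 1 m, Nat.add_sub_cancel]
  have hpow : (m + 1 + 1) ^ m = ∑ k ∈ Finset.range (m + 1),
      (m + 1) ^ k * 1 ^ (m - k) * Nat.choose m k := add_pow (m + 1) 1 m
  rw [hpow, Finset.sum_range_succ']
  simp only [one_pow, mul_one, Nat.choose_zero_right, pow_zero, one_mul]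
  rw [add_comm, ← Finset.Ico_add_one_right_eq_Icc, Finset.sum_Ico_eq_sum_range]
  congr 1
  apply Finset.sum_congr rfl
  intro j hj
  rw [Finset.mem_range] at hj
  have h1 : m + 1 - (1 + j) = m - j := by omega
  have h2 : (m + 1) - (m - j) = j + 1 := by omega
  have h3 : m - j = (m - j - 1) + 1 := by omega
  rw [h1]
  have key : (m + 1) * Nat.choose m (m - j - 1) = Nat.choose (m + 1) (m - j) * (m - j) := by
    rw [h3]; exact Nat.add_one_mul_choose_eq m (m - j - 1)
  have hsymm : Nat.choose m (m - j - 1) = Nat.choose m (j + 1) := by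
    have : m - j - 1 = m - (j + 1) := by omega
    rw [this, Nat.choose_symm (by omega)]
  have : 1 + j - 1 = j := by omega
  rw [this]
  calc Nat.choose (m + 1) (m - j) * (m - j) * (m + 1) ^ j
      = (m + 1) * Nat.choose m (m - j - 1) * (m + 1) ^ j := by rw [key]
    _ = (m + 1) ^ (j + 1) * Nat.choose m (j + 1) := by rw [hsymm]; ring
end

section
/- Let U_n be the n×n integer matrix with all entries 1 except diagonal entries U[i][i] = 2 for i ≥ 2 (first diagonal entry is 1), and V_n the n×n integer matrix equal to the identity except that the first row is (1, -1, -1, ..., -1). Then U_n and V_n are unimodular (determinant ±1), and U_n · circ(n,-1,...,-1) · V_n = diag(1, n+1, n+1, ..., n+1). -/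
/-!
Index the rows by a finite type with a distinguished pivot `i₀`, let `c` be the number of
indices, `e` the indicator vector of `i₀`, `J = 𝟙𝟙ᵀ` the all-ones matrix and `N = e (𝟙 - e)ᵀ`.
Then `M = (c + 1) I - J`, `U = J + diag (𝟙 - e)` and `V = I - N`. Since `N² = 0`, `V` is
unimodular with inverse `I + N`, and `U = (I + N)ᵀ (I + N)` is unimodular as well.
Multiplying out with `J² = c J` gives `U M = e 𝟙ᵀ + (c + 1) diag (𝟙 - e)`, and because
`𝟙ᵀ N = (𝟙 - e)ᵀ` and `diag (𝟙 - e) N = 0`, `U M V = e eᵀ + (c + 1) diag (𝟙 - e)`.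
-/

open Matrix

section
variable {ι : Type*} (R : Type*) [DecidableEq ι] [CommRing R]

def smithLeft (i₀ : ι) : Matrix ι ι R := of fun i j => if i = j ∧ i ≠ i₀ then 2 else 1

def smithRight (i₀ : ι) : Matrix ι ι R :=
  of fun i j => if i = j then 1 else if i = i₀ then -1 else 0

def pivotRow (i₀ : ι) : Matrix ι ι R := vecMulVec (Pi.single i₀ 1) (1 - Pi.single i₀ 1)

variable {R}

theorem smithLeft_eq (i₀ : ι) :
    smithLeft R i₀ = vecMulVec 1 1 + diagonal (1 - Pi.single i₀ 1) := by
  ext i j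
  rcases eq_or_ne i j with rfl | h
  · by_cases h₀ : i = i₀ <;> simp [smithLeft, h₀]
    norm_num
  · simp [smithLeft, h]

theorem smithRight_eq (i₀ : ι) : smithRight R i₀ = 1 - pivotRow R i₀ := by
  ext i j
  by_cases h : i = j <;> by_cases h₀ : i = i₀ <;> by_cases h₁ : j = i₀ <;>
    simp_all [smithRight, pivotRow, one_apply, vecMulVec_apply]

variable [Fintype ι]

variable (R) in
def circMatrix : Matrix ι ι R := of fun i j => if i = j then (Fintype.card ι : R) else -1

theorem circMatrix_eq :
    circMatrix R = ((Fintype.card ι : R) + 1) • (1 : Matrix ι ι R) - vecMulVec 1 1 := by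
  ext i j
  by_cases h : i = j <;> simp [circMatrix, one_apply, h]

theorem pivotRow_mul_self (i₀ : ι) : pivotRow R i₀ * pivotRow R i₀ = 0 := by
  simp [pivotRow, vecMulVec_mul_vecMulVec]

theorem isNilpotent_pivotRow (i₀ : ι) : IsNilpotent (pivotRow R i₀) :=
  ⟨2, by rw [pow_two, pivotRow_mul_self]⟩

theorem smithLeft_eq_transpose_mul (i₀ : ι) :
    smithLeft R i₀ = (1 + pivotRow R i₀)ᵀ * (1 + pivotRow R i₀) := by
  ext i j
  simp [smithLeft, pivotRow, transpose_add, add_mul, mul_add, vecMulVec_mul_vecMulVec,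
    transpose_vecMulVec, vecMulVec_apply, Pi.single_apply, one_apply]
  split_ifs <;> simp_all
  norm_num

theorem isUnit_smithLeft (i₀ : ι) : IsUnit (smithLeft R i₀) := by
  have h := (isNilpotent_pivotRow (R := R) i₀).isUnit_one_add
  rw [smithLeft_eq_transpose_mul]
  exact ((isUnit_transpose _).mpr h).mul h

theorem isUnit_smithRight (i₀ : ι) : IsUnit (smithRight R i₀) := by
  rw [smithRight_eq]
  exact (isNilpotent_pivotRow i₀).isUnit_one_sub

theorem smithLeft_mulVec_one (i₀ : ι) :
    smithLeft R i₀ *ᵥ 1 = ((Fintype.card ι : R) + 1) • 1 - Pi.single i₀ 1 := by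
  ext i
  simp [smithLeft_eq, add_mulVec, vecMulVec_mulVec, mulVec_diagonal, -one_vecMulVec,
    -vecMulVec_one]
  ring

theorem smithLeft_mul_circMatrix (i₀ : ι) :
    smithLeft R i₀ * circMatrix R =
      vecMulVec (Pi.single i₀ 1) 1 +
        ((Fintype.card ι : R) + 1) • diagonal (1 - Pi.single i₀ 1) := by
  rw [circMatrix_eq, mul_sub, Matrix.mul_smul, mul_one, mul_vecMulVec, smithLeft_mulVec_one,
    smithLeft_eq]
  ext i j
  simp [vecMulVec_apply, -vecMulVec_one, -one_vecMulVec]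
  ring

theorem one_vecMul_pivotRow (i₀ : ι) : 1 ᵥ* pivotRow R i₀ = 1 - Pi.single i₀ 1 := by
  simp [pivotRow, vecMul_vecMulVec]

theorem smithLeft_mul_circMatrix_mul_smithRight (i₀ : ι) :
    smithLeft R i₀ * circMatrix R * smithRight R i₀ =
      diagonal fun i => if i = i₀ then 1 else (Fintype.card ι : R) + 1 := by
  rw [smithLeft_mul_circMatrix, smithRight_eq, mul_sub, mul_one, add_mul, vecMulVec_mul,
    one_vecMul_pivotRow, Matrix.smul_mul, pivotRow, mul_vecMulVec]
  ext i j
  simp [vecMulVec_apply, Pi.single_apply, diagonal_apply]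
  split_ifs <;> simp_all

end

theorem smith_normal_form_circ (n : ℕ) (hn : 2 ≤ n)
    (U V M : Matrix (Fin n) (Fin n) ℤ)
    (hU : ∀ i j, U i j = if i = j ∧ (i : ℕ) ≠ 0 then 2 else 1)
    (hV : ∀ i j, V i j = if i = j then 1 else if (i : ℕ) = 0 then -1 else 0)
    (hM : ∀ i j, M i j = if i = j then (n : ℤ) else -1) :
    IsUnit U.det ∧ IsUnit V.det ∧
    U * M * V = Matrix.diagonal (fun i : Fin n => if (i : ℕ) = 0 then 1 else (n : ℤ) + 1) := by
  set i₀ : Fin n := ⟨0, by omega⟩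
  have hi₀ : ∀ i : Fin n, (i : ℕ) = 0 ↔ i = i₀ := by simp [Fin.ext_iff, i₀]
  obtain rfl : U = smithLeft ℤ i₀ := by ext i j; simp [hU, smithLeft, hi₀]
  obtain rfl : V = smithRight ℤ i₀ := by ext i j; simp [hV, smithRight, hi₀]
  obtain rfl : M = circMatrix ℤ := by ext i j; simp [hM, circMatrix]
  refine ⟨(isUnit_iff_isUnit_det _).mp (isUnit_smithLeft i₀),
    (isUnit_iff_isUnit_det _).mp (isUnit_smithRight i₀), ?_⟩
  simp [smithLeft_mul_circMatrix_mul_smithRight, hi₀]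
end

section
/- The quotient group ℤ^n / M ℤ^n, where M is the n×n circulant matrix circ(n,-1,...,-1), is isomorphic to (ℤ/(n+1)ℤ)^(n-1). -/
theorem quotient_iso (n : ℕ) (hn : 2 ≤ n)
    (M : Matrix (Fin n) (Fin n) ℤ)
    (hM : ∀ i j, M i j = if i = j then (n : ℤ) else -1)
    (Λ : AddSubgroup (Fin n → ℤ))
    (hΛ : Λ = AddSubgroup.closure {v | ∃ j, v = fun i => M i j}) :
    Nonempty (((Fin n → ℤ) ⧸ Λ) ≃+ (Fin (n - 1) → ZMod (n + 1))) := by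
  have hn0 : 0 < n := by omega
  set z : Fin n := ⟨0, hn0⟩ with hz
  -- the hom
  let f : (Fin n → ℤ) →+ (Fin (n - 1) → ZMod (n + 1)) :=
    { toFun := fun v k =>
        ((v ⟨k.val + 1, by have := k.isLt; omega⟩ - v z : ℤ) : ZMod (n + 1))
      map_zero' := by funext k; simp
      map_add' := by intro a b; funext k; push_cast [Pi.add_apply]; ring }
  have hfapp : ∀ (v : Fin n → ℤ) (k : Fin (n - 1)),
      f v k = ((v ⟨k.val + 1, by have := k.isLt; omega⟩ - v z : ℤ) : ZMod (n + 1)) :=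
    fun v k => rfl
  -- surjectivity
  have hsurj : Function.Surjective f := by
    intro w
    refine ⟨fun i => if h : i.val = 0 then 0 else ((w ⟨i.val - 1, by have := i.isLt; omega⟩).val : ℤ), ?_⟩
    funext k
    rw [hfapp]
    have h1 : (⟨k.val + 1, by have := k.isLt; omega⟩ : Fin n).val ≠ 0 := by simp
    simp only [h1, dif_neg, hz, dif_pos]
    have : (⟨k.val + 1 - 1, by have := k.isLt; omega⟩ : Fin (n - 1)) = k := by
      apply Fin.ext; simp
    rw [this]
    simp [ZMod.natCast_val, ZMod.cast_id]
  -- key elements of Λ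
  have hones : (fun _ : Fin n => (1 : ℤ)) ∈ Λ := by
    have : (fun _ : Fin n => (1 : ℤ)) = ∑ j : Fin n, (fun i => M i j) := by
      funext i
      rw [Finset.sum_apply]
      have : ∀ j : Fin n, M i j = (if j = i then ((n : ℤ) + 1) else 0) + (-1) := by
        intro j
        rw [hM i j]
        by_cases h : j = i
        · subst h; simp
        · rw [if_neg (fun hh => h hh.symm), if_neg h]; ring
      simp only [this]
      rw [Finset.sum_add_distrib, Finset.sum_ite_eq']
      simp [Finset.card_univ, nsmul_eq_mul]
    rw [this, hΛ]
    exact sum_mem (fun j _ => AddSubgroup.subset_closure ⟨j, rfl⟩)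
  have hej : ∀ j : Fin n, (fun i => if i = j then ((n : ℤ) + 1) else 0) ∈ Λ := by
    intro j
    have heq : (fun i => if i = j then ((n : ℤ) + 1) else 0)
        = (fun i => M i j) + (fun _ => (1 : ℤ)) := by
      funext i
      rw [Pi.add_apply, hM i j]
      by_cases h : i = j <;> simp [h]
    rw [heq]
    exact Λ.add_mem (hΛ ▸ AddSubgroup.subset_closure ⟨j, rfl⟩) hones
  -- kernel = Λ
  have hker : Λ = f.ker := by
    apply le_antisymm
    · rw [hΛ]
      rw [AddSubgroup.closure_le]
      rintro v ⟨j, rfl⟩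
      simp only [SetLike.mem_coe, AddMonoidHom.mem_ker]
      funext k
      simp only [Pi.zero_apply]
      rw [hfapp, hM _ j, hM z j, ZMod.intCast_zmod_eq_zero_iff_dvd]
      push_cast
      by_cases h1 : (⟨k.val + 1, by have := k.isLt; omega⟩ : Fin n) = j
        <;> by_cases h2 : z = j
      · rw [if_pos h1, if_pos h2]; simp
      · rw [if_pos h1, if_neg h2]; exact ⟨1, by ring⟩
      · rw [if_neg h1, if_pos h2]; exact ⟨-1, by ring⟩
      · rw [if_neg h1, if_neg h2]; simp
    · intro v hv
      rw [AddMonoidHom.mem_ker] at hv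
      have hdvd : ∀ i : Fin n, ((n : ℤ) + 1) ∣ (v i - v z) := by
        intro i
        by_cases h : i.val = 0
        · have : i = z := Fin.ext h
          simp [this]
        · have hk : i.val - 1 < n - 1 := by have := i.isLt; omega
          have := congrFun hv ⟨i.val - 1, hk⟩
          rw [hfapp] at this
          have hi : (⟨(⟨i.val - 1, hk⟩ : Fin (n-1)).val + 1, by omega⟩ : Fin n) = i := by
            apply Fin.ext; simp; omega
          rw [hi] at this
          simp only [Pi.zero_apply] at this
          have := (ZMod.intCast_zmod_eq_zero_iff_dvd _ (n + 1)).mp this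
          push_cast at this
          exact this
      set d : Fin n → ℤ := fun i => (v i - v z) / ((n : ℤ) + 1) with hd
      have hveq : v = (v z) • (fun _ : Fin n => (1 : ℤ))
          + ∑ i : Fin n, d i • (fun j => if j = i then ((n : ℤ) + 1) else 0) := by
        funext i
        simp only [Pi.add_apply, Pi.smul_apply, Finset.sum_apply, smul_eq_mul]
        rw [Finset.sum_congr rfl (fun j _ => by rw [mul_ite, mul_zero]),
          Finset.sum_ite_eq]
        simp only [Finset.mem_univ, if_true, mul_one]
        have hc : d i * ((n : ℤ) + 1) = v i - v z := Int.ediv_mul_cancel (hdvd i)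
        rw [hc]; ring
      rw [hveq]
      exact Λ.add_mem (Λ.zsmul_mem hones _)
        (sum_mem (fun i _ => Λ.zsmul_mem (hej i) _))
  exact ⟨(QuotientAddGroup.quotientAddEquivOfEq hker).trans
    (QuotientAddGroup.quotientKerEquivOfSurjective f hsurj)⟩
end

section
/- The quotient group ℤ^n / (mM) ℤ^n, where M = circ(n,-1,...,-1) and m ≥ 1, is isomorphic to ℤ/mℤ ⊕ (ℤ/m(n+1)ℤ)^(n-1), and in particular has order m^n (n+1)^(n-1). -/
theorem quotient_iso_m (n m : ℕ) (hn : 2 ≤ n) (hm : 1 ≤ m)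
    (M : Matrix (Fin n) (Fin n) ℤ)
    (hM : ∀ i j, M i j = if i = j then (n : ℤ) else -1)
    (Λ : AddSubgroup (Fin n → ℤ))
    (hΛ : Λ = AddSubgroup.closure {v | ∃ j, v = fun i => (m : ℤ) * M i j}) :
    Nonempty (((Fin n → ℤ) ⧸ Λ) ≃+ (ZMod m × (Fin (n - 1) → ZMod (m * (n + 1))))) ∧
    Nat.card ((Fin n → ℤ) ⧸ Λ) = m ^ n * (n + 1) ^ (n - 1) := by
  obtain ⟨k, rfl⟩ : ∃ k, n = k + 2 := ⟨n - 2, by omega⟩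
  subst hΛ
  set S : Set (Fin (k + 2) → ℤ) := {v | ∃ j, v = fun i => (m : ℤ) * M i j} with hS
  -- the homomorphism
  let f : (Fin (k + 2) → ℤ) →+ ZMod m × (Fin (k + 2 - 1) → ZMod (m * (k + 2 + 1))) :=
    AddMonoidHom.mk' (fun x => ((((∑ j, x j : ℤ) : ZMod m)),
      fun i => ((x i.succ + ∑ j, x j : ℤ) : ZMod (m * (k + 2 + 1))))) (by
        intro a b
        refine Prod.ext ?_ (funext fun i => ?_)
        · show (((∑ j, (a j + b j) : ℤ)) : ZMod m) = _
          rw [Finset.sum_add_distrib]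
          simp only [Prod.fst_add]
          push_cast; ring
        · show (((a i.succ + b i.succ) + ∑ j, (a j + b j) : ℤ) : ZMod (m * (k + 2 + 1))) = _
          rw [Finset.sum_add_distrib]
          simp only [Prod.snd_add, Pi.add_apply]
          push_cast; ring)
  have hfapply : ∀ x : Fin (k + 2) → ℤ, f x = ((((∑ j, x j : ℤ) : ZMod m)),
      fun i => ((x i.succ + ∑ j, x j : ℤ) : ZMod (m * (k + 2 + 1)))) := fun x => rfl
  -- column sums
  have hcol : ∀ j : Fin (k + 2), (∑ i, (m : ℤ) * M i j) = m := by
    intro j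
    have h1 : ∀ i : Fin (k + 2), (m : ℤ) * M i j =
        (if i = j then (m : ℤ) * ((k : ℤ) + 3) else 0) + (-(m : ℤ)) := by
      intro i; rw [hM]; split <;> push_cast <;> ring
    rw [Finset.sum_congr rfl fun i _ => h1 i, Finset.sum_add_distrib,
      Finset.sum_ite_eq' Finset.univ j, Finset.sum_const, Finset.card_univ, Fintype.card_fin]
    simp only [Finset.mem_univ, if_true]
    push_cast; ring
  -- closure ≤ ker
  have hle1 : AddSubgroup.closure S ≤ f.ker := by
    rw [AddSubgroup.closure_le]
    rintro v ⟨j, rfl⟩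
    rw [SetLike.mem_coe, AddMonoidHom.mem_ker, hfapply]
    refine Prod.ext ?_ (funext fun i => ?_)
    · show (((∑ i, (m : ℤ) * M i j) : ℤ) : ZMod m) = (0 : ZMod m × _).1
      rw [hcol]
      simpa using (ZMod.intCast_zmod_eq_zero_iff_dvd (m : ℤ) m).mpr
        (by exact_mod_cast dvd_refl (m : ℤ))
    · show (((m : ℤ) * M i.succ j + ∑ i, (m : ℤ) * M i j : ℤ) : ZMod (m * (k + 2 + 1)))
        = (0 : ZMod m × (Fin (k + 2 - 1) → ZMod (m * (k + 2 + 1)))).2 i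
      rw [hcol, hM]
      have : ((0 : ZMod m × (Fin (k + 2 - 1) → ZMod (m * (k + 2 + 1)))).2 i) = 0 := rfl
      rw [this, ZMod.intCast_zmod_eq_zero_iff_dvd]
      split
      · refine ⟨1, ?_⟩; push_cast; ring
      · refine ⟨0, ?_⟩; push_cast; ring
  -- ker ≤ closure
  have hle2 : f.ker ≤ AddSubgroup.closure S := by
    intro x hx
    rw [AddMonoidHom.mem_ker, hfapply, Prod.ext_iff] at hx
    obtain ⟨h1, h2⟩ := hx
    set s : ℤ := ∑ j, x j with hs
    have hm1 : (m : ℤ) ∣ s := (ZMod.intCast_zmod_eq_zero_iff_dvd _ _).mp h1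
    have hdvd : ∀ i : Fin (k + 1), ((m * (k + 2 + 1) : ℕ) : ℤ) ∣ x i.succ + s := by
      intro i
      exact (ZMod.intCast_zmod_eq_zero_iff_dvd _ _).mp (congrFun h2 i)
    have hsumsucc : ∑ i : Fin (k + 1), x i.succ = s - x 0 := by
      have h := Fin.sum_univ_succ x
      have h2' : s = x 0 + ∑ i : Fin (k + 1), x i.succ := h
      omega
    have hdvd0 : ((m * (k + 2 + 1) : ℕ) : ℤ) ∣ x 0 + s := by
      have h3 : ((m * (k + 2 + 1) : ℕ) : ℤ) ∣ ∑ i : Fin (k + 1), (x i.succ + s) :=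
        Finset.dvd_sum fun i _ => hdvd i
      have h4 : ((m * (k + 2 + 1) : ℕ) : ℤ) ∣ ((k : ℤ) + 3) * s := by
        obtain ⟨c, hc⟩ := hm1
        exact ⟨c, by rw [hc]; push_cast; ring⟩
      have h5 : x 0 + s = ((k : ℤ) + 3) * s - ∑ i : Fin (k + 1), (x i.succ + s) := by
        rw [Finset.sum_add_distrib, hsumsucc, Finset.sum_const, Finset.card_univ,
          Fintype.card_fin]
        push_cast; ring
      rw [h5]; exact dvd_sub h4 h3
    have hall : ∀ i : Fin (k + 2), ∃ t : ℤ, x i + s = ((m * (k + 2 + 1) : ℕ) : ℤ) * t := by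
      intro i
      induction i using Fin.cases with
      | zero => exact hdvd0
      | succ i => exact hdvd i
    choose c hc using hall
    have hNc : ((m * (k + 2 + 1) : ℕ) : ℤ) * ∑ i, c i = ((k : ℤ) + 3) * s := by
      rw [Finset.mul_sum]
      have h6 : ∑ i, ((m * (k + 2 + 1) : ℕ) : ℤ) * c i = ∑ i, (x i + s) :=
        Finset.sum_congr rfl fun i _ => (hc i).symm
      rw [h6, Finset.sum_add_distrib, ← hs, Finset.sum_const, Finset.card_univ,
        Fintype.card_fin]
      push_cast; ring
    have hsc : (m : ℤ) * ∑ i, c i = s := by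
      have hk3 : ((k : ℤ) + 3) ≠ 0 := by positivity
      apply mul_left_cancel₀ hk3
      rw [← hNc]; push_cast; ring
    have hxeq : x = ∑ j, c j • (fun i => (m : ℤ) * M i j) := by
      funext i
      rw [Finset.sum_apply]
      have expand : ∀ j : Fin (k + 2), (c j • (fun i => (m : ℤ) * M i j)) i =
          (if j = i then ((m * (k + 2 + 1) : ℕ) : ℤ) * c j else 0) - (m : ℤ) * c j := by
        intro j
        simp only [Pi.smul_apply, smul_eq_mul, hM]
        by_cases h : i = j
        · subst h; simp only [if_pos rfl]; push_cast; ring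
        · rw [if_neg h, if_neg (Ne.symm h)]; ring
      rw [Finset.sum_congr rfl fun j _ => expand j, Finset.sum_sub_distrib,
        Finset.sum_ite_eq' Finset.univ i, ← Finset.mul_sum]
      simp only [Finset.mem_univ, if_true]
      rw [hsc]
      linarith [hc i]
    have hgen : ∀ j : Fin (k + 2), (fun i => (m : ℤ) * M i j) ∈ S := by
      intro j; rw [hS]; exact ⟨j, rfl⟩
    rw [hxeq]
    exact AddSubgroup.sum_mem _ fun j _ =>
      AddSubgroup.zsmul_mem _ (AddSubgroup.subset_closure (hgen j)) (c j)
  have hker : f.ker = AddSubgroup.closure S := le_antisymm hle2 hle1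
  -- surjectivity
  have hsurj : Function.Surjective f := by
    rintro ⟨a, b⟩
    refine ⟨Fin.cons ((ZMod.cast a : ℤ) - ∑ i : Fin (k + 1), ((ZMod.cast (b i) : ℤ)
      - (ZMod.cast a : ℤ))) (fun i => (ZMod.cast (b i) : ℤ) - (ZMod.cast a : ℤ)), ?_⟩
    have hsx : (∑ j, (Fin.cons ((ZMod.cast a : ℤ) - ∑ i : Fin (k + 1), ((ZMod.cast (b i) : ℤ)
        - (ZMod.cast a : ℤ))) (fun i => (ZMod.cast (b i) : ℤ) - (ZMod.cast a : ℤ))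
        : Fin (k + 2) → ℤ) j) = (ZMod.cast a : ℤ) := by
      rw [Fin.sum_univ_succ]
      simp only [Fin.cons_zero, Fin.cons_succ]
      ring
    rw [hfapply, hsx]
    have hbv : ∀ i : Fin (k + 1), (ZMod.cast (b i) : ℤ) - (ZMod.cast a : ℤ)
        + (ZMod.cast a : ℤ) = (ZMod.cast (b i) : ℤ) := fun i => by ring
    refine Prod.ext ?_ (funext fun i => ?_)
    · exact ZMod.intCast_zmod_cast a
    · simp only [Fin.cons_succ, hbv]
      exact ZMod.intCast_zmod_cast (b i)
  rw [← hker]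
  have e : ((Fin (k + 2) → ℤ) ⧸ f.ker) ≃+
      (ZMod m × (Fin (k + 2 - 1) → ZMod (m * (k + 2 + 1)))) :=
    QuotientAddGroup.quotientKerEquivOfSurjective f hsurj
  refine ⟨⟨e⟩, ?_⟩
  rw [Nat.card_congr e.toEquiv, Nat.card_prod, Nat.card_zmod, Nat.card_fun, Nat.card_zmod,
    Nat.card_eq_fintype_card, Fintype.card_fin]
  have h1 : k + 2 - 1 = k + 1 := rfl
  rw [h1, mul_pow]
  ring
end

section
/- Let n ≥ 2 and let L ⊂ ℕ^n be the set of vectors x with 0 ≤ x_i ≤ n-1 such that for every i with 1 ≤ i ≤ n-1, at most i entries of x are ≥ n-i. Then |L| = (n+1)^(n-1). -/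
open Finset

/-- Abstract cycle lemma: for S with drift -1 per period m, a unique start r < m
has all window increments nonnegative. -/
lemma cycle_unique (m : ℕ) (hm : 0 < m) (S : ℕ → ℤ)
    (hS : ∀ k, S (k + m) = S k - 1) :
    ∃! r, r < m ∧ ∀ k, 1 ≤ k → k < m → S r ≤ S (r + k) := by
  classical
  -- minimizers of S on range m
  set A : Finset ℕ := (Finset.range m).filter (fun r => ∀ j ∈ Finset.range m, S r ≤ S j) with hA
  have hAne : A.Nonempty := by
    obtain ⟨r, hr, hmin⟩ := Finset.exists_min_image (Finset.range m) S ⟨0, by simpa using hm⟩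
    exact ⟨r, by simp only [hA, Finset.mem_filter]; exact ⟨hr, hmin⟩⟩
  set r := A.min' hAne with hr
  have hrA : r ∈ A := A.min'_mem hAne
  have hrlt : r < m := (Finset.mem_filter.mp hrA).1 |> Finset.mem_range.mp
  have hrmin : ∀ j < m, S r ≤ S j := by
    intro j hj
    exact (Finset.mem_filter.mp hrA).2 j (Finset.mem_range.mpr hj)
  have hstrict : ∀ j < r, S r < S j := by
    intro j hj
    rcases lt_or_ge (S j) (S r) with h | h
    · exact absurd (hrmin j (hj.trans hrlt)) (not_le.mpr h)
    rcases eq_or_lt_of_le h with h | h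
    · exfalso
      have hjA : j ∈ A := by
        simp only [hA, Finset.mem_filter, Finset.mem_range]
        refine ⟨hj.trans hrlt, fun i hi => ?_⟩
        rw [← h]; exact hrmin i hi
      have := A.min'_le j hjA
      omega
    · exact h
  have hprop : ∀ k, 1 ≤ k → k < m → S r ≤ S (r + k) := by
    intro k hk1 hkm
    rcases lt_or_ge (r + k) m with h | h
    · exact hrmin _ h
    · have hj : r + k - m < r := by omega
      have : r + k = (r + k - m) + m := by omega
      rw [this, hS]
      have := hstrict _ hj
      omega
  refine ⟨r, ⟨hrlt, hprop⟩, ?_⟩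
  rintro y ⟨hym, hyprop⟩
  by_contra hne
  -- general: if a < b both valid, contradiction
  have key : ∀ a b : ℕ, a < b → b < m →
      (∀ k, 1 ≤ k → k < m → S a ≤ S (a + k)) →
      (∀ k, 1 ≤ k → k < m → S b ≤ S (b + k)) → False := by
    intro a b hab hbm ha hb
    have h1 : S a ≤ S b := by
      have := ha (b - a) (by omega) (by omega)
      rwa [Nat.add_sub_cancel' (le_of_lt hab)] at this
    have h2 : S b ≤ S (a + m) := by
      have := hb (a + m - b) (by omega) (by omega)
      rwa [Nat.add_sub_cancel' (by omega)] at this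
    rw [hS] at h2
    omega
  rcases lt_trichotomy y r with h | h | h
  · exact key y r h hrlt hyprop hprop
  · exact hne h
  · exact key r y h hym hprop hyprop

open Finset

section PF
variable {n : ℕ}

/-- number of coordinates equal to t -/
def cnt (x : Fin n → ZMod (n+1)) (t : ZMod (n+1)) : ℕ :=
  (Finset.univ.filter fun j => x j = t).card

/-- cumulative count -/
def Tc (x : Fin n → ZMod (n+1)) (k : ℕ) : ℕ :=
  ∑ t ∈ Finset.range k, cnt x (t : ZMod (n+1))

def Sc (x : Fin n → ZMod (n+1)) (k : ℕ) : ℤ := (Tc x k : ℤ) - k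

def IsPF (x : Fin n → ZMod (n+1)) : Prop :=
  ∀ k, 1 ≤ k → k ≤ n → k ≤ (Finset.univ.filter fun j => (x j).val < k).card

lemma sum_cnt (x : Fin n → ZMod (n+1)) : ∑ u : ZMod (n+1), cnt x u = n := by
  classical
  have := Finset.card_eq_sum_card_fiberwise
    (f := x) (s := Finset.univ) (t := Finset.univ) (fun j _ => Finset.mem_univ _)
  simpa [cnt] using this.symm

lemma Tc_add (x : Fin n → ZMod (n+1)) (r k : ℕ) :
    Tc x (r + k) = Tc x r + ∑ t ∈ Finset.range k, cnt x ((t + r : ℕ) : ZMod (n+1)) := by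
  rw [Tc, Finset.sum_range_add, Tc]
  congr 1
  exact Finset.sum_congr rfl fun t _ => by rw [Nat.add_comm r t]

lemma window_full (x : Fin n → ZMod (n+1)) (r : ℕ) :
    ∑ t ∈ Finset.range (n+1), cnt x ((t + r : ℕ) : ZMod (n+1)) = n := by
  classical
  refine Eq.trans ?_ (sum_cnt x)
  apply Finset.sum_nbij' (i := fun t => ((t + r : ℕ) : ZMod (n+1)))
    (j := fun u => (u - (r : ZMod (n+1))).val)
  · intro t _; exact Finset.mem_univ _
  · intro u _; exact Finset.mem_range.mpr (ZMod.val_lt _)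
  · intro t ht
    rw [Finset.mem_range] at ht
    push_cast
    rw [add_sub_cancel_right, ZMod.val_natCast_of_lt ht]
  · intro u _
    push_cast
    rw [ZMod.natCast_val, ZMod.cast_id, sub_add_cancel]
  · intro t _; rfl

lemma Sc_period (x : Fin n → ZMod (n+1)) (k : ℕ) :
    Sc x (k + (n+1)) = Sc x k - 1 := by
  have := Tc_add x k (n+1)
  rw [window_full] at this
  simp only [Sc, this]
  push_cast
  ring

/-- counting lemma: the shifted parking count equals a window sum -/
lemma count_shift (x : Fin n → ZMod (n+1)) (c : ZMod (n+1)) (k : ℕ) (hk : k ≤ n + 1) :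
    (Finset.univ.filter fun j => (x j + c).val < k).card
      = ∑ t ∈ Finset.range k, cnt x ((t + (-c).val : ℕ) : ZMod (n+1)) := by
  classical
  rw [Finset.card_eq_sum_card_fiberwise
    (f := fun j => (x j + c).val) (t := Finset.range k)
    (fun j hj => Finset.mem_range.mpr (by simpa using hj))]
  refine Finset.sum_congr rfl fun t ht => ?_
  rw [Finset.mem_range] at ht
  congr 1
  ext j
  simp only [Finset.mem_filter, Finset.mem_univ, true_and, cnt]
  constructor
  · rintro ⟨-, h2⟩
    have : x j + c = (t : ZMod (n+1)) := by
      rw [← h2, ZMod.natCast_val, ZMod.cast_id]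
    rw [eq_comm, ← sub_eq_iff_eq_add] at this
    rw [← this]
    push_cast
    rw [ZMod.natCast_val, ZMod.cast_id]
    ring
  · intro h
    have hxc : x j + c = (t : ZMod (n+1)) := by
      rw [h]
      push_cast
      rw [ZMod.natCast_val, ZMod.cast_id]
      ring
    rw [hxc, ZMod.val_natCast_of_lt (by omega)]
    exact ⟨ht, rfl⟩

lemma isPF_shift_iff (x : Fin n → ZMod (n+1)) (c : ZMod (n+1)) :
    IsPF (fun j => x j + c) ↔
      ∀ k, 1 ≤ k → k < n + 1 → Sc x ((-c).val) ≤ Sc x ((-c).val + k) := by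
  constructor
  · intro h k hk1 hk2
    have hc := h k hk1 (by omega)
    rw [count_shift x c k (by omega)] at hc
    have ht := Tc_add x ((-c).val) k
    simp only [Sc, ht]
    omega
  · intro h k hk1 hk2
    have hs := h k hk1 (by omega)
    rw [count_shift x c k (by omega)]
    have ht := Tc_add x ((-c).val) k
    simp only [Sc, ht] at hs
    omega

lemma exists_unique_shift (x : Fin n → ZMod (n+1)) :
    ∃! c : ZMod (n+1), IsPF (fun j => x j + c) := by
  obtain ⟨r, ⟨hrm, hr⟩, hru⟩ := cycle_unique (n+1) (Nat.succ_pos n) (Sc x) (Sc_period x)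
  refine ⟨-(r : ZMod (n+1)), ?_, ?_⟩
  · show IsPF fun j => x j + -(r : ZMod (n+1))
    rw [isPF_shift_iff]
    rw [neg_neg, ZMod.val_natCast_of_lt hrm]
    exact hr
  · intro c hc
    replace hc : IsPF fun j => x j + c := hc
    rw [isPF_shift_iff] at hc
    have : (-c).val = r := hru _ ⟨ZMod.val_lt _, hc⟩
    have h2 : -c = (r : ZMod (n+1)) := by
      rw [← this, ZMod.natCast_val, ZMod.cast_id]
    rw [← h2, neg_neg]

end PF
section Count
variable {n : ℕ}

lemma card_isPF (n : ℕ) (hn : 1 ≤ n) :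
    Nat.card {p : Fin n → ZMod (n+1) // IsPF p} = (n+1)^(n-1) := by
  classical
  set Φ : ZMod (n+1) × {p : Fin n → ZMod (n+1) // IsPF p} → (Fin n → ZMod (n+1)) :=
    fun q => fun j => q.2.1 j + q.1 with hΦ
  have hbij : Function.Bijective Φ := by
    constructor
    · rintro ⟨c, p⟩ ⟨c', p'⟩ h
      have e : ∀ j, p.1 j + c = p'.1 j + c' := fun j => congrFun h j
      obtain ⟨c0, hc0, hu⟩ := exists_unique_shift p.1
      have h0 : IsPF (fun j => p.1 j + 0) := by
        have := p.2
        simpa using this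
      have h1 : IsPF (fun j => p.1 j + (c - c')) := by
        have heq : (fun j => p.1 j + (c - c')) = p'.1 := by
          funext j
          have := e j
          linear_combination this
        rw [heq]; exact p'.2
      have hcc : c - c' = 0 := by rw [hu _ h1, hu _ h0]
      have hc : c = c' := by
        have := sub_eq_zero.mp hcc; exact this
      subst hc
      have hp : p = p' := by
        apply Subtype.ext
        funext j
        have := e j
        exact add_right_cancel this
      rw [hp]
    · intro a
      obtain ⟨c, hc, -⟩ := exists_unique_shift a
      refine ⟨(-c, ⟨fun j => a j + c, hc⟩), ?_⟩
      funext j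
      simp [hΦ]
  have hcard := Nat.card_eq_of_bijective Φ hbij
  rw [Nat.card_prod, Nat.card_zmod, Nat.card_fun, Nat.card_zmod,
    show Nat.card (Fin n) = n from by simp] at hcard
  have hpow : (n+1)^n = (n+1) * (n+1)^(n-1) := by
    have h : (n-1)+1 = n := by omega
    calc (n+1)^n = (n+1)^((n-1)+1) := by rw [h]
      _ = (n+1)^(n-1)*(n+1) := pow_succ _ _
      _ = (n+1)*(n+1)^(n-1) := mul_comm _ _
  rw [hpow] at hcard
  exact Nat.eq_of_mul_eq_mul_left (by omega) hcard

lemma pf_of_memL (hn : 2 ≤ n) (x : Fin n → ℕ)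
    (h1 : ∀ j, x j ≤ n - 1)
    (h2 : ∀ i, 1 ≤ i → i ≤ n - 1 →
      (Finset.univ.filter fun j => n - i ≤ x j).card ≤ i) :
    IsPF (fun j => ((x j : ℕ) : ZMod (n+1))) := by
  intro k hk1 hk2
  have hfe : (Finset.univ.filter fun j =>
      (((fun j => ((x j : ℕ) : ZMod (n+1))) j)).val < k)
      = Finset.univ.filter fun j => x j < k := by
    ext j
    have hlt : x j < n + 1 := by have := h1 j; omega
    simp only [Finset.mem_filter, Finset.mem_univ, true_and,
      ZMod.val_natCast, Nat.mod_eq_of_lt hlt]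
  rw [hfe]
  rcases eq_or_lt_of_le hk2 with rfl | hlt
  · have : (Finset.univ.filter fun j => x j < k) = Finset.univ := by
      apply Finset.filter_true_of_mem
      intro j _
      have := h1 j; omega
    rw [this]
    simp
  · have hi1 : 1 ≤ n - k := by omega
    have hi2 : n - k ≤ n - 1 := by omega
    have hc := h2 (n - k) hi1 hi2
    have hcompl := Finset.card_filter_add_card_filter_not
      (s := Finset.univ) (p := fun j => n - (n - k) ≤ x j)
    have heq : (Finset.univ.filter fun j => ¬ (n - (n - k) ≤ x j))
        = Finset.univ.filter fun j => x j < k := by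
      ext j
      simp only [Finset.mem_filter, Finset.mem_univ, true_and]
      omega
    rw [heq] at hcompl
    have hnk : n - (n - k) = k := by omega
    rw [hnk] at hcompl
    simp only [Finset.card_univ, Fintype.card_fin] at hcompl
    have hc' := h2 (n - k) hi1 hi2
    -- card filter (k ≤ x j) ≤ n - k
    have : (Finset.univ.filter fun j => k ≤ x j).card ≤ n - k := by
      have h3 : (Finset.univ.filter fun j => n - (n - k) ≤ x j) =
          (Finset.univ.filter fun j => k ≤ x j) := by rw [hnk]
      rw [← h3]; exact hc'
    omega

lemma memL_of_pf (hn : 2 ≤ n) (p : Fin n → ZMod (n+1)) (hp : IsPF p) :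
    (∀ j, (p j).val ≤ n - 1) ∧ ∀ i, 1 ≤ i → i ≤ n - 1 →
      (Finset.univ.filter fun j => n - i ≤ (p j).val).card ≤ i := by
  have hall : ∀ j, (p j).val < n := by
    have h := hp n (by omega) le_rfl
    have hle : (Finset.univ.filter fun j => (p j).val < n).card ≤ n := by
      calc (Finset.univ.filter fun j => (p j).val < n).card
          ≤ (Finset.univ : Finset (Fin n)).card := Finset.card_filter_le _ _
        _ = n := by simp
    have hcard : (Finset.univ.filter fun j => (p j).val < n).card = n := le_antisymm hle h
    have huniv : (Finset.univ.filter fun j => (p j).val < n) = Finset.univ :=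
      Finset.eq_univ_of_card _ (by simpa using hcard)
    intro j
    have hj : j ∈ Finset.univ.filter fun j => (p j).val < n := by
      rw [huniv]; exact Finset.mem_univ j
    exact (Finset.mem_filter.mp hj).2
  refine ⟨fun j => by have := hall j; omega, fun i hi1 hi2 => ?_⟩
  have h := hp (n - i) (by omega) (by omega)
  have hcompl := Finset.card_filter_add_card_filter_not
    (s := Finset.univ) (p := fun j => n - i ≤ (p j).val)
  have heq : (Finset.univ.filter fun j => ¬ (n - i ≤ (p j).val))
      = Finset.univ.filter fun j => (p j).val < n - i := by
    ext j
    simp only [Finset.mem_filter, Finset.mem_univ, true_and]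
    omega
  rw [heq] at hcompl
  simp only [Finset.card_univ, Fintype.card_fin] at hcompl
  omega

end Count

theorem card_L (n : ℕ) (hn : 2 ≤ n)
    (L : Set (Fin n → ℕ))
    (hL : L = {x | (∀ j, x j ≤ n - 1) ∧
      ∀ i, 1 ≤ i → i ≤ n - 1 →
        (Finset.univ.filter (fun j => n - i ≤ x j)).card ≤ i}) :
    Nat.card L = (n + 1) ^ (n - 1) := by
  classical
  subst hL
  have e : {x : Fin n → ℕ | (∀ j, x j ≤ n - 1) ∧
      ∀ i, 1 ≤ i → i ≤ n - 1 →
        (Finset.univ.filter (fun j => n - i ≤ x j)).card ≤ i} ≃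
      {p : Fin n → ZMod (n+1) // IsPF p} :=
    { toFun := fun x => ⟨fun j => ((x.1 j : ℕ) : ZMod (n+1)),
        pf_of_memL hn x.1 x.2.1 x.2.2⟩
      invFun := fun p => ⟨fun j => (p.1 j).val, memL_of_pf hn p.1 p.2⟩
      left_inv := by
        rintro ⟨x, hx⟩
        apply Subtype.ext
        funext j
        have hlt : x j < n + 1 := by have := hx.1 j; omega
        simp only [ZMod.val_natCast, Nat.mod_eq_of_lt hlt]
      right_inv := by
        rintro ⟨p, hp⟩
        apply Subtype.ext
        funext j
        simp [ZMod.natCast_val, ZMod.cast_id] }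
  rw [Nat.card_congr e, card_isPF n (by omega)]
end

section
/- Let n ≥ 2 and L ⊂ ℕ^n be as above (entries ≤ n-1, at most i entries ≥ n-i for each 1 ≤ i ≤ n-1). Then the number of x ∈ L with x_1 + ... + x_n = n(n-1)/2 maximal, i.e. the number of vectors in L at maximum 1-norm, is n!. -/
open Finset

private lemma gauss_aux (m : ℕ) : ∑ k ∈ range m, (m - k) = (m + 1) * m / 2 := by
  have h1 : ∑ k ∈ range m, (m - k) = ∑ k ∈ range m, (k + 1) := by
    rw [← Finset.sum_range_reflect]
    refine Finset.sum_congr rfl fun k hk => ?_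
    simp only [mem_range] at hk
    omega
  have h2 : ∑ k ∈ range m, (k + 1) = ∑ k ∈ range (m + 1), k := by
    rw [Finset.sum_range_succ' (fun k => k) m]
    simp
  have h3 := Finset.sum_range_id_mul_two (m + 1)
  rw [h1, h2]
  simp only [Nat.add_sub_cancel] at h3
  exact (Nat.div_eq_of_eq_mul_left (by norm_num) (by rw [← h3, Nat.mul_comm])).symm

private lemma sum_counts (n m : ℕ) (x : Fin n → ℕ) (h : ∀ j, x j ≤ m) :
    ∑ j, x j = ∑ k ∈ range m, (univ.filter (fun j => k + 1 ≤ x j)).card := by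
  have h1 : ∀ j, x j = ∑ k ∈ range m, (if k + 1 ≤ x j then 1 else 0) := by
    intro j
    rw [← Finset.card_filter]
    have he : (range m).filter (fun k => k + 1 ≤ x j) = range (x j) := by
      ext k
      simp only [mem_filter, mem_range]
      have := h j
      omega
    rw [he, card_range]
  calc ∑ j, x j = ∑ j, ∑ k ∈ range m, (if k + 1 ≤ x j then 1 else 0) :=
        Finset.sum_congr rfl (fun j _ => h1 j)
    _ = ∑ k ∈ range m, ∑ j, (if k + 1 ≤ x j then 1 else 0) := Finset.sum_comm
    _ = ∑ k ∈ range m, (univ.filter (fun j => k + 1 ≤ x j)).card := by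
        refine Finset.sum_congr rfl fun k _ => ?_
        rw [Finset.card_filter]

theorem card_max_norm_L (n : ℕ) (hn : 2 ≤ n)
    (L : Set (Fin n → ℕ))
    (hL : L = {x | (∀ j, x j ≤ n - 1) ∧
      ∀ i, 1 ≤ i → i ≤ n - 1 →
        (Finset.univ.filter (fun j => n - i ≤ x j)).card ≤ i}) :
    Nat.card {x : Fin n → ℕ // x ∈ L ∧ ∑ j, x j = n * (n - 1) / 2} = Nat.factorial n := by
  subst hL
  set m := n - 1 with hm
  have hnm : n = m + 1 := by omega
  have hmem : ∀ σ : Equiv.Perm (Fin n),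
      (fun j => ((σ j : ℕ))) ∈ {x : Fin n → ℕ | (∀ j, x j ≤ n - 1) ∧
        ∀ i, 1 ≤ i → i ≤ n - 1 →
          (Finset.univ.filter (fun j => n - i ≤ x j)).card ≤ i} ∧
      (∑ j, ((σ j : ℕ))) = n * (n - 1) / 2 := by
    intro σ
    refine ⟨⟨fun j => by show (σ j : ℕ) ≤ n - 1; have := (σ j).isLt; omega, ?_⟩, ?_⟩
    · intro i h1 h2
      have hmap : (univ.filter (fun j => n - i ≤ ((σ j : ℕ)))).map σ.toEmbedding
          = univ.filter (fun v : Fin n => n - i ≤ (v : ℕ)) := by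
        ext v
        simp only [Finset.mem_map, mem_filter, mem_univ, true_and, Equiv.coe_toEmbedding]
        constructor
        · rintro ⟨j, hj, rfl⟩; exact hj
        · intro hv; exact ⟨σ.symm v, by simpa using hv, by simp⟩
      have hcard : (univ.filter (fun j => n - i ≤ ((σ j : ℕ)))).card
          = (univ.filter (fun v : Fin n => n - i ≤ (v : ℕ))).card := by
        rw [← hmap, Finset.card_map]
      rw [hcard]
      have hI : (univ.filter (fun v : Fin n => n - i ≤ (v : ℕ))).map Fin.valEmbedding
          = Finset.Ico (n - i) n := by
        ext k
        simp only [Finset.mem_map, mem_filter, mem_univ, true_and, Fin.valEmbedding_apply,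
          Finset.mem_Ico]
        constructor
        · rintro ⟨v, hv, rfl⟩; exact ⟨hv, v.isLt⟩
        · rintro ⟨h1', h2'⟩; exact ⟨⟨k, h2'⟩, h1', rfl⟩
      have hc2 : (univ.filter (fun v : Fin n => n - i ≤ (v : ℕ))).card = n - (n - i) := by
        rw [← Finset.card_map Fin.valEmbedding, hI, Nat.card_Ico]
      rw [hc2]; omega
    · have h1 : ∑ j, ((σ j : ℕ)) = ∑ v : Fin n, (v : ℕ) :=
        Equiv.sum_comp σ (fun v : Fin n => (v : ℕ))
      have h2 : ∑ v : Fin n, (v : ℕ) = ∑ k ∈ range n, k :=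
        Fin.sum_univ_eq_sum_range (fun k => k) n
      have h3 := Finset.sum_range_id_mul_two n
      rw [h1, h2]
      exact (Nat.div_eq_of_eq_mul_left (by norm_num) (by rw [← h3, Nat.mul_comm])).symm
  have hf : Function.Bijective (fun σ : Equiv.Perm (Fin n) =>
      (⟨fun j => ((σ j : ℕ)), hmem σ⟩ :
        {x : Fin n → ℕ // x ∈ {x : Fin n → ℕ | (∀ j, x j ≤ n - 1) ∧
          ∀ i, 1 ≤ i → i ≤ n - 1 →
            (Finset.univ.filter (fun j => n - i ≤ x j)).card ≤ i} ∧
        (∑ j, x j) = n * (n - 1) / 2})) := by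
    constructor
    · intro σ τ h
      have h' := congrArg Subtype.val h
      ext j
      have := congrFun h' j
      simpa [Fin.ext_iff] using this
    · rintro ⟨x, hx, hsum⟩
      obtain ⟨hle, hcons⟩ := hx
      have hle' : ∀ j, x j ≤ m := fun j => hle j
      have hbound : ∀ k ∈ range m, (univ.filter (fun j => k + 1 ≤ x j)).card ≤ m - k := by
        intro k hk
        simp only [mem_range] at hk
        have h1 : n - (m - k) = k + 1 := by omega
        have h2 := hcons (m - k) (by omega) (by omega)
        rw [h1] at h2
        exact h2
      have hsum' : ∑ k ∈ range m, (univ.filter (fun j => k + 1 ≤ x j)).card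
          = ∑ k ∈ range m, (m - k) := by
        have e1 := sum_counts n m x hle'
        have e2 := gauss_aux m
        have e3 : n * (n - 1) / 2 = (m + 1) * m / 2 := by rw [hnm]; simp
        omega
      have hcnt : ∀ k ∈ range m, (univ.filter (fun j => k + 1 ≤ x j)).card = m - k :=
        ((Finset.sum_eq_sum_iff_of_le hbound).mp hsum')
      -- counts of upper sets
      have cardA : ∀ v, v ≤ m → (univ.filter (fun j => v ≤ x j)).card = m + 1 - v := by
        intro v hv
        match v with
        | 0 =>
          rw [Finset.filter_true_of_mem (fun j _ => Nat.zero_le (x j))]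
          simp [card_univ, hnm]
        | (w + 1) =>
          have h1 := hcnt w (by simp only [mem_range]; omega)
          have h2 : m + 1 - (w + 1) = m - w := by omega
          rw [h2]; exact h1
      have cardB : ∀ v, v ≤ m → (univ.filter (fun j => v + 1 ≤ x j)).card = m - v := by
        intro v hv
        rcases Nat.lt_or_ge v m with h | h
        · exact hcnt v (by simp only [mem_range]; omega)
        · have hv' : v = m := by omega
          subst hv'
          have : (univ.filter (fun j => m + 1 ≤ x j)) = ∅ := by
            apply Finset.filter_false_of_mem
            intro j _
            have := hle' j
            omega
          rw [this]
          simp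
      -- injectivity of x
      have hinj : Function.Injective x := by
        intro a b hab
        by_contra hne
        set v := x a with hv
        have hvm : v ≤ m := hle' a
        have hsub : insert a (insert b (univ.filter (fun j => v + 1 ≤ x j)))
            ⊆ univ.filter (fun j => v ≤ x j) := by
          intro j hj
          simp only [Finset.mem_insert, mem_filter, mem_univ, true_and] at hj ⊢
          rcases hj with rfl | rfl | hj
          · omega
          · omega
          · omega
        have hbnot : b ∉ univ.filter (fun j => v + 1 ≤ x j) := by
          simp only [mem_filter, mem_univ, true_and]
          omega
        have hanot : a ∉ insert b (univ.filter (fun j => v + 1 ≤ x j)) := by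
          simp only [Finset.mem_insert, mem_filter, mem_univ, true_and]
          push_neg
          exact ⟨hne, by omega⟩
        have hcard := Finset.card_le_card hsub
        rw [Finset.card_insert_of_notMem hanot, Finset.card_insert_of_notMem hbnot,
          cardB v hvm, cardA v hvm] at hcard
        omega
      -- build the permutation
      have hlt : ∀ j, x j < n := fun j => by have := hle' j; omega
      set g : Fin n → Fin n := fun j => ⟨x j, hlt j⟩ with hg
      have hginj : Function.Injective g := by
        intro a b hab
        apply hinj
        have := congrArg Fin.val hab
        exact this
      have hgbij : Function.Bijective g := Finite.injective_iff_bijective.mp hginj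
      refine ⟨Equiv.ofBijective g hgbij, ?_⟩
      apply Subtype.ext
      funext j
      rfl
  rw [Nat.card_congr (Equiv.ofBijective _ hf).symm, Nat.card_eq_fintype_card]
  simp [Fintype.card_perm]
end

section
/- The set L of vectors x ∈ ℕ^n with entries ≤ n-1 and at most i entries ≥ n-i for each 1 ≤ i ≤ n-1 forms a complete set of residues modulo the lattice M ℤ^n, where M = circ(n, -1, ..., -1): every vector of ℤ^n is congruent modulo Mℤ^n to exactly one element of L. -/
lemma divw (q a k : ℤ) (hq : 0 < q) (hk0 : 0 ≤ k) (hkq : k ≤ q) :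
    a / q - (a - k) / q = if a % q < k then 1 else 0 := by
  have hqne : q ≠ 0 := by omega
  have hr0 : 0 ≤ a % q := Int.emod_nonneg a hqne
  have hrq : a % q < q := Int.emod_lt_of_pos a hq
  have hdecomp : a % q + q * (a / q) = a := Int.emod_add_mul_ediv a q
  have h1 : a - k = (a % q - k) + q * (a / q) := by linarith
  rw [h1, Int.add_mul_ediv_left _ _ hqne]
  split_ifs with h
  · have h2 : a % q - k = (a % q - k + q) + q * (-1) := by ring
    have h3 : (a % q - k + q) / q = 0 := Int.ediv_eq_zero_of_lt (by omega) (by omega)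
    rw [h2, Int.add_mul_ediv_left _ _ hqne, h3]
    ring
  · have h3 : (a % q - k) / q = 0 := Int.ediv_eq_zero_of_lt (by omega) (by omega)
    rw [h3]
    ring

lemma lambda_char (n : ℕ) (hn : 2 ≤ n) (M : Matrix (Fin n) (Fin n) ℤ)
    (hM : ∀ i j, M i j = if i = j then (n : ℤ) else -1) (w : Fin n → ℤ) :
    w ∈ AddSubgroup.closure {v : Fin n → ℤ | ∃ j, v = fun i => M i j} ↔
      ∀ i j, ((n : ℤ) + 1) ∣ w i - w j := by
  set q : ℤ := (n : ℤ) + 1 with hqdef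
  have hqne : q ≠ 0 := by omega
  constructor
  · intro hw
    have hle : AddSubgroup.closure {v : Fin n → ℤ | ∃ j, v = fun i => M i j} ≤
        { carrier := {w : Fin n → ℤ | ∀ i j, q ∣ w i - w j},
          zero_mem' := by intro i j; simp
          add_mem' := by
            intro a b ha hb i j
            have h3 : (a + b) i - (a + b) j = (a i - a j) + (b i - b j) := by
              simp [Pi.add_apply]; ring
            rw [h3]; exact dvd_add (ha i j) (hb i j)
          neg_mem' := by
            intro a ha i j
            have h3 : (-a) i - (-a) j = -(a i - a j) := by simp [Pi.neg_apply]; ring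
            rw [h3]; exact dvd_neg.mpr (ha i j) } := by
      rw [AddSubgroup.closure_le]
      rintro w' ⟨j0, rfl⟩ i i'
      simp only [hM]
      split_ifs with h h' h'
      · exact ⟨0, by ring⟩
      · exact ⟨1, by ring⟩
      · exact ⟨-1, by ring⟩
      · exact ⟨0, by ring⟩
    exact hle hw
  · intro h
    have hdvd : ∀ j, q ∣ w j + ∑ i, w i := by
      intro j
      have h1 : q ∣ (∑ i, w i) - n * w j := by
        have h2 : (∑ i, w i) - n * w j = ∑ i, (w i - w j) := by
          rw [Finset.sum_sub_distrib, Finset.sum_const, Finset.card_univ,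
            Fintype.card_fin, nsmul_eq_mul]
        rw [h2]; exact Finset.dvd_sum (fun i _ => h i j)
      have h2 : w j + ∑ i, w i = ((∑ i, w i) - n * w j) + q * w j := by
        rw [hqdef]; ring
      rw [h2]; exact dvd_add h1 (dvd_mul_right q (w j))
    set a : Fin n → ℤ := fun j => (w j + ∑ i, w i) / q with ha
    have haq : ∀ j, q * a j = w j + ∑ i, w i := fun j => Int.mul_ediv_cancel' (hdvd j)
    have hsa : ∑ j, a j = ∑ i, w i := by
      have h1 : q * ∑ j, a j = q * ∑ i, w i := by
        rw [Finset.mul_sum]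
        simp only [haq]
        rw [Finset.sum_add_distrib, Finset.sum_const, Finset.card_univ,
          Fintype.card_fin, nsmul_eq_mul, hqdef]
        ring
      exact mul_left_cancel₀ hqne h1
    have hw : w = ∑ j, a j • (fun i => M i j) := by
      funext i
      rw [Finset.sum_apply]
      have h1 : ∀ j, (a j • (fun i => M i j)) i = (if j = i then q * a j else 0) - a j := by
        intro j
        simp only [Pi.smul_apply, smul_eq_mul, hM]
        rcases eq_or_ne j i with h2 | h2
        · simp [h2, hqdef]; ring
        · simp [h2, Ne.symm h2]
      rw [Finset.sum_congr rfl (fun j _ => h1 j), Finset.sum_sub_distrib,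
        Finset.sum_ite_eq', hsa]
      simp only [Finset.mem_univ, if_true]
      have := haq i
      linarith
    rw [hw]
    exact AddSubgroup.sum_mem _ (fun j _ =>
      AddSubgroup.zsmul_mem _ (AddSubgroup.subset_closure
        (show _ ∈ {v : Fin n → ℤ | ∃ j, v = fun i => M i j} from ⟨j, rfl⟩)) _)

theorem L_complete_residues (n : ℕ) (hn : 2 ≤ n)
    (M : Matrix (Fin n) (Fin n) ℤ)
    (hM : ∀ i j, M i j = if i = j then (n : ℤ) else -1)
    (Λ : AddSubgroup (Fin n → ℤ))
    (hΛ : Λ = AddSubgroup.closure {v | ∃ j, v = fun i => M i j})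
    (L : Set (Fin n → ℕ))
    (hL : L = {x | (∀ j, x j ≤ n - 1) ∧
      ∀ i, 1 ≤ i → i ≤ n - 1 →
        (Finset.univ.filter (fun j => n - i ≤ x j)).card ≤ i}) :
    ∀ v : Fin n → ℤ, ∃! x : Fin n → ℕ,
      x ∈ L ∧ ((fun i => (x i : ℤ)) - v) ∈ Λ := by
  subst hΛ hL
  set q : ℤ := (n : ℤ) + 1 with hqdef
  have hq' : 0 < q := by rw [hqdef]; positivity
  have hqne : q ≠ 0 := ne_of_gt hq'
  intro v
  set u : Fin n → ℤ := fun j => v j % q with hudef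
  have hu0 : ∀ j, 0 ≤ u j := fun j => Int.emod_nonneg _ hqne
  have huq : ∀ j, u j < q := fun j => Int.emod_lt_of_pos _ hq'
  have huv : ∀ j, v j - u j = q * (v j / q) := by
    intro j
    have := Int.emod_add_mul_ediv (v j) q
    simp only [hudef]
    linarith
  set G : ℤ → ℤ := fun m => ∑ j, (u j + m) / q with hGdef
  set T : ℤ → ℤ := fun m => q * G m - n * m with hTdef
  have hGshift : ∀ m t : ℤ, G (m + q * t) = G m + n * t := by
    intro m t
    simp only [hGdef]
    have h1 : ∀ j : Fin n, (u j + (m + q * t)) / q = (u j + m) / q + t := by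
      intro j
      rw [show u j + (m + q * t) = (u j + m) + q * t by ring,
        Int.add_mul_ediv_left _ _ hqne]
    calc ∑ j, (u j + (m + q * t)) / q = ∑ j, ((u j + m) / q + t) :=
          Finset.sum_congr rfl (fun j _ => h1 j)
      _ = (∑ j, (u j + m) / q) + n * t := by
          rw [Finset.sum_add_distrib, Finset.sum_const, Finset.card_univ,
            Fintype.card_fin, nsmul_eq_mul]
  have hTshift : ∀ m t : ℤ, T (m + q * t) = T m := by
    intro m t
    simp only [hTdef, hGshift]
    ring
  have hTmod : ∀ m : ℤ, T (m % q) = T m := by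
    intro m
    conv_rhs => rw [show m = m % q + q * (m / q) from (Int.emod_add_mul_ediv m q).symm]
    rw [hTshift]
  have hTdvd : ∀ m : ℤ, q ∣ T m - m := by
    intro m
    refine ⟨G m - m, ?_⟩
    simp only [hTdef]
    rw [hqdef]
    ring
  have hTinj : ∀ a b : ℤ, 0 ≤ a → a < q → 0 ≤ b → b < q → T a = T b → a = b := by
    intro a b ha haq hb hbq he
    have d1 : q ∣ T a - a := hTdvd a
    have d2 : q ∣ T a - b := by rw [he]; exact hTdvd b
    obtain ⟨s, hs⟩ := dvd_sub d2 d1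
    have hab : a - b = q * s := by linarith
    rcases lt_trichotomy s 0 with h | h | h
    · nlinarith
    · rw [h, mul_zero] at hab; omega
    · nlinarith
  have hFcard : ∀ c k : ℤ, 0 ≤ k → k ≤ q →
      ((Finset.univ.filter (fun j => (u j + c) % q < k)).card : ℤ) = G c - G (c - k) := by
    intro c k hk0 hkq
    have h1 : G c - G (c - k) = ∑ j, ((u j + c) / q - (u j + c - k) / q) := by
      simp only [hGdef]
      rw [← Finset.sum_sub_distrib]
      refine Finset.sum_congr rfl (fun j _ => ?_)
      rw [show u j + (c - k) = u j + c - k by ring]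
    rw [h1, Finset.sum_congr rfl (fun j _ => divw q (u j + c) k hq' hk0 hkq),
      Finset.sum_boole]
  have hkey : ∀ c k : ℤ, 1 ≤ k → k ≤ (n : ℤ) →
      ((k ≤ ((Finset.univ.filter (fun j => (u j + c) % q < k)).card : ℤ)) ↔
        T (c - k) < T c) := by
    intro c k h1 h2
    have hcard := hFcard c k (by omega) (by omega)
    set F : ℤ := ((Finset.univ.filter (fun j => (u j + c) % q < k)).card : ℤ) with hF
    have hF0 : 0 ≤ F := Int.natCast_nonneg _
    have hT : T c - T (c - k) = q * F - n * k := by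
      simp only [hTdef]
      rw [hcard]
      ring
    constructor
    · intro hk
      have hmul : q * k ≤ q * F := mul_le_mul_of_nonneg_left hk (le_of_lt hq')
      have hqk : q * k - n * k = k := by rw [hqdef]; ring
      linarith
    · intro hlt
      by_contra hcon
      push_neg at hcon
      have hFk : F ≤ k - 1 := by omega
      have hmul : q * F ≤ q * (k - 1) := mul_le_mul_of_nonneg_left hFk (le_of_lt hq')
      have hqk : q * (k - 1) - n * k = k - q := by rw [hqdef]; ring
      have hq2 : q = (n : ℤ) + 1 := hqdef
      linarith
  have hmemP : ∀ c : ℤ,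
      ((∀ j, ((u j + c) % q).toNat ≤ n - 1) ∧
        ∀ i, 1 ≤ i → i ≤ n - 1 →
          (Finset.univ.filter (fun j => n - i ≤ ((u j + c) % q).toNat)).card ≤ i) ↔
      (∀ k : ℤ, 1 ≤ k → k ≤ (n : ℤ) →
        k ≤ ((Finset.univ.filter (fun j => (u j + c) % q < k)).card : ℤ)) := by
    intro c
    have hx : ∀ j, ((((u j + c) % q).toNat : ℤ)) = (u j + c) % q :=
      fun j => Int.toNat_of_nonneg (Int.emod_nonneg _ hqne)
    constructor
    · rintro ⟨hb, hf⟩ k hk1 hkn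
      lift k to ℕ using (by omega)
      have hfilt : (Finset.univ.filter (fun j => (u j + c) % q < (k : ℤ))) =
          (Finset.univ.filter (fun j => ((u j + c) % q).toNat < k)) := by
        refine Finset.filter_congr (fun j _ => ?_)
        omega
      rw [hfilt]
      rcases eq_or_lt_of_le (show k ≤ n by exact_mod_cast hkn) with hkn' | hkn'
      · have huniv : Finset.univ.filter (fun j => ((u j + c) % q).toNat < k) =
            Finset.univ := by
          refine Finset.filter_true_of_mem (fun j _ => ?_)
          have := hb j
          omega
        rw [huniv, Finset.card_univ, Fintype.card_fin]
        exact_mod_cast hkn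
      · have hi1 : 1 ≤ n - k := by omega
        have hi2 : n - k ≤ n - 1 := by omega
        have hff := hf (n - k) hi1 hi2
        have hsplit := Finset.card_filter_add_card_filter_not
          (s := Finset.univ) (p := fun j => n - (n - k) ≤ ((u j + c) % q).toNat)
        have hfilt2 : Finset.univ.filter
            (fun j => ¬ (n - (n - k) ≤ ((u j + c) % q).toNat)) =
            Finset.univ.filter (fun j => ((u j + c) % q).toNat < k) := by
          refine Finset.filter_congr (fun j _ => ?_)
          constructor <;> intro <;> omega
        rw [hfilt2, Finset.card_univ, Fintype.card_fin] at hsplit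
        have hcard1 : (Finset.univ.filter
            (fun j => n - (n - k) ≤ ((u j + c) % q).toNat)).card ≤ n - k := by
          have heq : n - (n - k) = n - (n - k) := rfl
          exact hff
        have : k ≤ (Finset.univ.filter (fun j => ((u j + c) % q).toNat < k)).card := by
          omega
        exact_mod_cast this
    · intro hP
      constructor
      · intro j
        have h1 := hP n (by omega) (le_refl _)
        have h2 : (n : ℕ) ≤ (Finset.univ.filter
            (fun j => (u j + c) % q < (n : ℤ))).card := by exact_mod_cast h1
        have h3 : (Finset.univ.filter (fun j => (u j + c) % q < (n : ℤ))).card ≤ n := by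
          calc _ ≤ Finset.univ.card := Finset.card_filter_le _ _
            _ = n := by rw [Finset.card_univ, Fintype.card_fin]
        have h4 : Finset.univ.filter (fun j => (u j + c) % q < (n : ℤ)) =
            Finset.univ := Finset.eq_univ_of_card _ (by rw [Fintype.card_fin]; omega)
        have h5 : (u j + c) % q < (n : ℤ) := by
          have := Finset.mem_filter.mp (h4 ▸ Finset.mem_univ j)
          exact this.2
        have h6 : 0 ≤ (u j + c) % q := Int.emod_nonneg _ hqne
        omega
      · intro i hi1 hi2
        have hk1 : (1 : ℤ) ≤ ((n - i : ℕ) : ℤ) := by omega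
        have hk2 : ((n - i : ℕ) : ℤ) ≤ (n : ℤ) := by omega
        have h1 := hP ((n - i : ℕ) : ℤ) hk1 hk2
        have h2 : (n - i : ℕ) ≤ (Finset.univ.filter
            (fun j => (u j + c) % q < ((n - i : ℕ) : ℤ))).card := by exact_mod_cast h1
        have hsplit := Finset.card_filter_add_card_filter_not
          (s := Finset.univ) (p := fun j => n - i ≤ ((u j + c) % q).toNat)
        have hfilt : Finset.univ.filter
            (fun j => ¬ (n - i ≤ ((u j + c) % q).toNat)) =
            Finset.univ.filter (fun j => (u j + c) % q < ((n - i : ℕ) : ℤ)) := by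
          refine Finset.filter_congr (fun j _ => ?_)
          have h6 : 0 ≤ (u j + c) % q := Int.emod_nonneg _ hqne
          constructor <;> intro <;> omega
        rw [hfilt, Finset.card_univ, Fintype.card_fin] at hsplit
        omega
  -- goodness: strict max property
  have hgoodmax : ∀ c : ℤ, (∀ k : ℤ, 1 ≤ k → k ≤ (n : ℤ) → T (c - k) < T c) →
      ∀ e : ℤ, 0 ≤ e → e < q → e ≠ c % q → T e < T (c % q) := by
    intro c hg e he0 heq hne
    have hk0 : 0 ≤ (c - e) % q := Int.emod_nonneg _ hqne
    have hkq : (c - e) % q < q := Int.emod_lt_of_pos _ hq'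
    have hkne : (c - e) % q ≠ 0 := by
      intro h0
      have hd : q ∣ c - e := Int.dvd_of_emod_eq_zero h0
      have h5 : c % q = e % q :=
        Int.emod_eq_emod_iff_emod_sub_eq_zero.mpr (Int.emod_eq_zero_of_dvd hd)
      rw [Int.emod_eq_of_lt he0 heq] at h5
      exact hne h5.symm
    have h1 : 1 ≤ (c - e) % q := by omega
    have h2 : (c - e) % q ≤ (n : ℤ) := by omega
    have h3 : T (c - (c - e) % q) = T e := by
      have hdc : c - (c - e) % q = e + q * ((c - e) / q) := by
        have := Int.emod_add_mul_ediv (c - e) q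
        linarith
      rw [hdc, hTshift]
    calc T e = T (c - (c - e) % q) := h3.symm
      _ < T c := hg _ h1 h2
      _ = T (c % q) := (hTmod c).symm
  have hgooduniq : ∀ c c' : ℤ,
      (∀ k : ℤ, 1 ≤ k → k ≤ (n : ℤ) → T (c - k) < T c) →
      (∀ k : ℤ, 1 ≤ k → k ≤ (n : ℤ) → T (c' - k) < T c') →
      c % q = c' % q := by
    intro c c' hc hc'
    by_contra hne
    have e1 : 0 ≤ c % q := Int.emod_nonneg _ hqne
    have e2 : c % q < q := Int.emod_lt_of_pos _ hq'
    have e3 : 0 ≤ c' % q := Int.emod_nonneg _ hqne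
    have e4 : c' % q < q := Int.emod_lt_of_pos _ hq'
    have g1 : T (c' % q) < T (c % q) := hgoodmax c hc _ e3 e4 (fun h => hne h.symm)
    have g2 : T (c % q) < T (c' % q) := hgoodmax c' hc' _ e1 e2 hne
    linarith
  have hgoodex : ∃ c : ℤ, ∀ k : ℤ, 1 ≤ k → k ≤ (n : ℤ) → T (c - k) < T c := by
    obtain ⟨c₀, hc₀, hmax⟩ := Finset.exists_max_image (Finset.Ico (0 : ℤ) q) T
      ⟨0, by simp [hq']⟩
    obtain ⟨h0le, h0lt⟩ := Finset.mem_Ico.mp hc₀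
    refine ⟨c₀, fun k hk1 hkn => ?_⟩
    have he0 : 0 ≤ (c₀ - k) % q := Int.emod_nonneg _ hqne
    have helt : (c₀ - k) % q < q := Int.emod_lt_of_pos _ hq'
    have h3 : T (c₀ - k) = T ((c₀ - k) % q) := (hTmod _).symm
    have hne : (c₀ - k) % q ≠ c₀ := by
      intro h
      have h5 : (c₀ - k) % q = c₀ % q := by rw [h, Int.emod_eq_of_lt h0le h0lt]
      have h6 : ((c₀ - k) - c₀) % q = 0 :=
        Int.emod_eq_emod_iff_emod_sub_eq_zero.mp h5
      have hd : q ∣ (c₀ - k) - c₀ := Int.dvd_of_emod_eq_zero h6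
      have hd2 : q ∣ k := by
        have : (c₀ - k) - c₀ = -k := by ring
        rw [this] at hd
        exact (dvd_neg.mp hd)
      have := Int.le_of_dvd (by omega) hd2
      omega
    have hle : T ((c₀ - k) % q) ≤ T c₀ := hmax _ (Finset.mem_Ico.mpr ⟨he0, helt⟩)
    have hlt : T ((c₀ - k) % q) ≠ T c₀ :=
      fun h => hne (hTinj _ _ he0 helt h0le h0lt h)
    rw [h3]
    exact lt_of_le_of_ne hle hlt
  have hcong : ∀ c : ℤ, ∀ y : Fin n → ℕ, (∀ j, (y j : ℤ) = (u j + c) % q) →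
      ((fun i => ((y i : ℕ) : ℤ)) - v) ∈
        AddSubgroup.closure {v0 : Fin n → ℤ | ∃ j, v0 = fun i => M i j} := by
    intro c y hy
    rw [lambda_char n hn M hM]
    intro i j
    simp only [Pi.sub_apply]
    rw [hy i, hy j]
    have e1 : ∀ i : Fin n, (u i + c) % q - (u i + c) = q * (-((u i + c) / q)) := by
      intro i
      have := Int.emod_add_mul_ediv (u i + c) q
      linarith
    have a1 := e1 i
    have a2 := e1 j
    have b1 := huv i
    have b2 := huv j
    refine ⟨(-((u i + c) / q)) - (-((u j + c) / q)) - v i / q + v j / q, ?_⟩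
    rw [hqdef] at a1 a2 b1 b2 ⊢
    linear_combination a1 - a2 - b1 + b2
  obtain ⟨c, hc⟩ := hgoodex
  have hxZ : ∀ (c : ℤ) (j : Fin n), ((((u j + c) % q).toNat : ℤ)) = (u j + c) % q :=
    fun c j => Int.toNat_of_nonneg (Int.emod_nonneg _ hqne)
  have hxL : (fun j => ((u j + c) % q).toNat) ∈ {x : Fin n → ℕ |
      (∀ j, x j ≤ n - 1) ∧ ∀ i, 1 ≤ i → i ≤ n - 1 →
        (Finset.univ.filter (fun j => n - i ≤ x j)).card ≤ i} := by
    have hP : ∀ k : ℤ, 1 ≤ k → k ≤ (n : ℤ) →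
        k ≤ ((Finset.univ.filter (fun j => (u j + c) % q < k)).card : ℤ) :=
      fun k h1 h2 => (hkey c k h1 h2).mpr (hc k h1 h2)
    exact (hmemP c).mpr hP
  refine ⟨(fun j => ((u j + c) % q).toNat),
    ⟨hxL, hcong c _ (fun j => hxZ c j)⟩, ?_⟩
  rintro y ⟨⟨hy1, hy2⟩, hyΛ⟩
  have hnpos : 0 < n := by omega
  have hdvd : ∀ i j : Fin n, q ∣ ((y i : ℤ) - v i) - ((y j : ℤ) - v j) := by
    have hh := (lambda_char n hn M hM _).mp hyΛ
    intro i j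
    have h := hh i j
    simpa [Pi.sub_apply] using h
  set i0 : Fin n := ⟨0, hnpos⟩ with hi0
  set c' : ℤ := (y i0 : ℤ) - v i0 with hc'def
  have hyx : ∀ j, (y j : ℤ) = (u j + c') % q := by
    intro j
    have h1 := hdvd j i0
    have h2 : ((y j : ℤ)) % q = (u j + c') % q := by
      rw [Int.emod_eq_emod_iff_emod_sub_eq_zero]
      apply Int.emod_eq_zero_of_dvd
      obtain ⟨s, hs⟩ := h1
      have b1 := huv j
      exact ⟨s + v j / q, by linarith⟩
    have hyb : (y j : ℤ) < q := by
      have := hy1 j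
      omega
    rw [← h2, Int.emod_eq_of_lt (by positivity) hyb]
  have hyeq : y = fun j => ((u j + c') % q).toNat := by
    funext j
    have h := hyx j
    omega
  have hy1' : ∀ j, ((u j + c') % q).toNat ≤ n - 1 := by
    intro j
    have := hy1 j
    rw [hyeq] at this
    exact this
  have hy2' : ∀ i, 1 ≤ i → i ≤ n - 1 →
      (Finset.univ.filter (fun j => n - i ≤ ((u j + c') % q).toNat)).card ≤ i := by
    intro i h1 h2
    have := hy2 i h1 h2
    simp only [hyeq] at this
    exact this
  have hP' := (hmemP c').mp ⟨hy1', hy2'⟩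
  have hc'good : ∀ k : ℤ, 1 ≤ k → k ≤ (n : ℤ) → T (c' - k) < T c' :=
    fun k h1 h2 => (hkey c' k h1 h2).mp (hP' k h1 h2)
  have hcc : c' % q = c % q := hgooduniq c' c hc'good hc
  rw [hyeq]
  funext j
  have hmodeq : (u j + c') % q = (u j + c) % q := by
    rw [Int.emod_eq_emod_iff_emod_sub_eq_zero]
    apply Int.emod_eq_zero_of_dvd
    have h6 : (c' - c) % q = 0 := Int.emod_eq_emod_iff_emod_sub_eq_zero.mp hcc
    obtain ⟨s, hs⟩ := Int.dvd_of_emod_eq_zero h6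
    exact ⟨s, by linarith⟩
  rw [hmodeq]
end

section
/- The Cayley digraph of the group (ℤ/(n+1)ℤ)^(n-1) with generating set B_n = {(1,1,...,1)} ∪ {(1,...,1,2,1,...,1) : the 2 in position j, 1 ≤ j ≤ n-1} (n generators in total) has diameter n(n-1)/2: every group element is a sum of at most n(n-1)/2 generators, and some element requires exactly n(n-1)/2. -/
lemma cd_cast_shift (n x t : ℕ) : ((x + (n+1)*t : ℕ) : ZMod (n+1)) = (x : ZMod (n+1)) := by
  have h0 : ((n + 1 : ℕ) : ZMod (n+1)) = 0 := ZMod.natCast_self _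
  push_cast at h0 ⊢
  rw [h0]; ring

lemma cd_val_sub_cast (n c j X t : ℕ) (hX : X < n+1) (hrel : X + c = j + (n+1)*t) :
    ((j : ZMod (n+1)) - (c : ZMod (n+1))).val = X := by
  have h1 : ((X + c : ℕ) : ZMod (n+1)) = ((j : ℕ) : ZMod (n+1)) := by
    rw [hrel]; exact cd_cast_shift n j t
  push_cast at h1
  have h2 : (j : ZMod (n+1)) - (c : ZMod (n+1)) = ((X : ℕ) : ZMod (n+1)) := by
    rw [eq_comm, eq_sub_iff_add_eq]; exact h1
  rw [h2, ZMod.val_cast_of_lt hX]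

lemma cd_int_help {q e : ℤ} (hq : 0 < q) (hd : q ∣ e) (h1 : -q < e) (h2 : e < q) : e = 0 := by
  obtain ⟨k, rfl⟩ := hd
  rcases lt_trichotomy k 0 with h | h | h
  · nlinarith
  · simp [h]
  · nlinarith

lemma cd_sum_val (n : ℕ) : 2 * ∑ x : ZMod (n+1), x.val = (n+1) * n := by
  have key : ∑ x : ZMod (n+1), x.val = ∑ i ∈ Finset.range (n+1), i := by
    rw [← Fin.sum_univ_eq_sum_range (fun i => i) (n+1)]
    apply Finset.sum_nbij' (fun (x : ZMod (n+1)) => (⟨x.val, x.val_lt⟩ : Fin (n+1)))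
      (fun (i : Fin (n+1)) => ((i : ℕ) : ZMod (n+1)))
    · intro a _; exact Finset.mem_univ _
    · intro a _; exact Finset.mem_univ _
    · intro a _; exact ZMod.natCast_rightInverse a
    · intro a _; exact Fin.ext (ZMod.val_cast_of_lt a.isLt)
    · intro a _; rfl
  rw [key, mul_comm, Finset.sum_range_id_mul_two]
  simp

lemma cd_coord (n : ℕ) (hn : 2 ≤ n) (b : Fin n → Fin (n-1) → ZMod (n+1))
    (hb : ∀ i p, b i p = if (i : ℕ) = (p : ℕ) + 1 then 2 else 1) (C : ℕ → ℕ) (p : Fin (n-1)) :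
    (∑ i : Fin n, C (i : ℕ) • b i) p
      = ((∑ i ∈ Finset.range n, C i : ℕ) : ZMod (n+1)) + (C ((p : ℕ) + 1) : ZMod (n+1)) := by
  have hp : (p : ℕ) + 1 ∈ Finset.range n := Finset.mem_range.mpr (by have := p.isLt; omega)
  rw [Finset.sum_apply]
  have e1 : ∀ i : Fin n, (C (i : ℕ) • b i) p
      = (fun j => (C j : ZMod (n+1)) * (if j = (p : ℕ) + 1 then 2 else 1)) (i : ℕ) := by
    intro i; simp only [Pi.smul_apply, hb, nsmul_eq_mul]
  rw [Finset.sum_congr rfl (fun i _ => e1 i),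
    Fin.sum_univ_eq_sum_range (fun j => (C j : ZMod (n+1)) * (if j = (p : ℕ) + 1 then 2 else 1)) n]
  have e2 : ∀ j, (C j : ZMod (n+1)) * (if j = (p : ℕ) + 1 then 2 else 1)
      = (C j : ZMod (n+1)) + (if j = (p : ℕ) + 1 then (C j : ZMod (n+1)) else 0) := by
    intro j; split <;> ring
  rw [Finset.sum_congr rfl (fun j _ => e2 j), Finset.sum_add_distrib,
    Finset.sum_ite_eq' (Finset.range n) ((p : ℕ) + 1), if_pos hp, Nat.cast_sum]

lemma cd_sum_split (n : ℕ) (hn : 2 ≤ n) (C : ℕ → ℕ) :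
    ∑ i ∈ Finset.range n, C i = ∑ i ∈ Finset.range (n-1), C (i+1) + C 0 := by
  have h : n = (n-1)+1 := by omega
  conv_lhs => rw [h]
  rw [Finset.sum_range_succ']

lemma cd_represent (n : ℕ) (hn : 2 ≤ n) (b : Fin n → Fin (n-1) → ZMod (n+1))
    (hb : ∀ i p, b i p = if (i : ℕ) = (p : ℕ) + 1 then 2 else 1)
    (g : Fin (n-1) → ZMod (n+1)) (N : ℕ)
    (hN : ∑ p, (g p - (N : ZMod (n+1))).val ≤ N) :
    ∃ c : Fin n → ℕ, (∑ i, c i) = N ∧ g = ∑ i, c i • b i := by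
  set A := ∑ p, (g p - (N : ZMod (n+1))).val with hA
  set D : ℕ → ℕ := fun j => if h : j < n - 1 then (g ⟨j, h⟩ - (N : ZMod (n+1))).val else 0 with hD
  set C : ℕ → ℕ := fun i => match i with | 0 => N - A | (j+1) => D j with hC
  have hDA : ∑ i ∈ Finset.range (n-1), D i = A := by
    rw [← Fin.sum_univ_eq_sum_range D (n-1), hA]
    apply Finset.sum_congr rfl; intro q _
    simp only [hD]
    rw [dif_pos q.isLt]
  have hCsum : ∑ i ∈ Finset.range n, C i = N := by
    rw [cd_sum_split n hn C]
    have h1 : ∑ i ∈ Finset.range (n-1), C (i+1) = A := hDA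
    have h2 : C 0 = N - A := rfl
    omega
  refine ⟨fun i => C (i : ℕ), ?_, ?_⟩
  · rw [Fin.sum_univ_eq_sum_range C n]; exact hCsum
  · funext p
    rw [cd_coord n hn b hb C p, hCsum]
    have h3 : C ((p : ℕ) + 1) = (g p - (N : ZMod (n+1))).val := by
      show D (p : ℕ) = _
      simp only [hD]; rw [dif_pos p.isLt]
    rw [h3, ZMod.natCast_rightInverse]
    ring

lemma cd_lower_N (n : ℕ) (hn : 2 ≤ n) (b : Fin n → Fin (n-1) → ZMod (n+1))
    (hb : ∀ i p, b i p = if (i : ℕ) = (p : ℕ) + 1 then 2 else 1)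
    (g : Fin (n-1) → ZMod (n+1)) (c : Fin n → ℕ) (hrep : g = ∑ i, c i • b i) :
    ∑ p, (g p - ((∑ i, c i : ℕ) : ZMod (n+1))).val ≤ ∑ i, c i := by
  set N := ∑ i, c i with hN
  set C : ℕ → ℕ := fun j => if h : j < n then c ⟨j, h⟩ else 0 with hCdef
  have hc : ∀ i : Fin n, c i = C (i : ℕ) := by
    intro i; simp only [hCdef]; rw [dif_pos i.isLt]
  have hCsum : ∑ i ∈ Finset.range n, C i = N := by
    rw [← Fin.sum_univ_eq_sum_range C n, hN]
    exact (Finset.sum_congr rfl fun i _ => (hc i).symm)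
  have hcoordv : ∀ p : Fin (n-1), (g p - (N : ZMod (n+1))).val ≤ C ((p : ℕ) + 1) := by
    intro p
    have h1 : g p = (N : ZMod (n+1)) + (C ((p : ℕ) + 1) : ZMod (n+1)) := by
      conv_lhs => rw [hrep]
      rw [show (∑ i, c i • b i) = ∑ i : Fin n, C (i : ℕ) • b i from
        Finset.sum_congr rfl fun i _ => by rw [hc i]]
      rw [cd_coord n hn b hb C p, hCsum]
    have h2 : g p - (N : ZMod (n+1)) = (C ((p : ℕ) + 1) : ZMod (n+1)) := by rw [h1]; ring
    rw [h2, ZMod.val_natCast]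
    exact Nat.mod_le _ _
  calc ∑ p, (g p - (N : ZMod (n+1))).val ≤ ∑ p : Fin (n-1), C ((p : ℕ) + 1) :=
        Finset.sum_le_sum fun p _ => hcoordv p
    _ = ∑ i ∈ Finset.range (n-1), C (i+1) := Fin.sum_univ_eq_sum_range (fun j => C (j+1)) (n-1)
    _ ≤ N := by rw [← hCsum, cd_sum_split n hn C]; omega

lemma cd_exists_N (n : ℕ) (hn : 2 ≤ n) (M : ℕ) (hM : 2*M = n*(n-1))
    (g : Fin (n-1) → ZMod (n+1)) :
    ∃ N : ℕ, N ≤ M ∧ ∑ p, (g p - (N : ZMod (n+1))).val ≤ N := by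
  by_contra hcon
  push_neg at hcon
  set f : ZMod (n+1) → ℕ := fun T => ∑ p, (g p - T).val with hf
  set V : ℕ := ∑ x : ZMod (n+1), x.val with hV
  have hV2 : 2 * V = (n+1)*n := cd_sum_val n
  have hsumf : ∑ T : ZMod (n+1), f T = (n-1) * V := by
    rw [hf, Finset.sum_comm]
    have h1 : ∀ p : Fin (n-1), ∑ T : ZMod (n+1), (g p - T).val = V := by
      intro p
      have := Equiv.sum_comp (Equiv.subLeft (g p)) (fun x : ZMod (n+1) => x.val)
      simpa [Equiv.subLeft] using this
    rw [Finset.sum_congr rfl fun p _ => h1 p, Finset.sum_const, Finset.card_univ,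
      Fintype.card_fin, smul_eq_mul]
  have key : ∀ T : ZMod (n+1),
      ((M : ℤ) - (((M : ZMod (n+1)) - T).val : ℤ))
        + (if (f T : ZMod (n+1)) = T then ((n : ℤ)+1) else (((f T : ZMod (n+1)) - T).val : ℤ))
        ≤ (f T : ℤ) := by
    intro T
    set r : ℕ := ((M : ZMod (n+1)) - T).val with hr
    have hrq : r < n+1 := ZMod.val_lt _
    have hd0 : (M : ℤ) - r < f T := by
      rcases le_or_gt r M with h | h
      · have h1 : ((M - r : ℕ) : ZMod (n+1)) = T := by
          rw [Nat.cast_sub h, hr, ZMod.natCast_rightInverse]; ring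
        have h2 := hcon (M - r) (by omega)
        rw [h1] at h2
        have hfT : f T = ∑ p, (g p - T).val := rfl
        omega
      · have : (0:ℤ) ≤ (f T : ℤ) := Int.natCast_nonneg _
        omega
    by_cases hft : (f T : ZMod (n+1)) = T
    · rw [if_pos hft]
      have hdvd : ((n+1 : ℕ) : ℤ) ∣ ((f T : ℤ) - ((M : ℤ) - r)) := by
        rw [← ZMod.intCast_zmod_eq_zero_iff_dvd]
        push_cast
        rw [hft, hr, ZMod.natCast_rightInverse]
        ring
      have h3 := Int.le_of_dvd (by omega) hdvd
      omega
    · rw [if_neg hft]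
      set w := (f T : ZMod (n+1)) - T with hw
      have hw0 : w ≠ 0 := sub_ne_zero.mpr hft
      have hwv : 0 < w.val := Nat.pos_of_ne_zero (fun h0 => hw0 ((ZMod.val_eq_zero w).mp h0))
      have hwlt : w.val < n+1 := ZMod.val_lt _
      have hdvd : ((n+1 : ℕ) : ℤ) ∣ ((f T : ℤ) - ((M : ℤ) - r) - (w.val : ℤ)) := by
        rw [← ZMod.intCast_zmod_eq_zero_iff_dvd]
        push_cast
        rw [hr, ZMod.natCast_rightInverse, ZMod.natCast_rightInverse, hw]
        ring
      rcases le_or_gt ((w.val : ℤ)) ((f T : ℤ) - ((M : ℤ) - r)) with h | h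
      · omega
      · exfalso
        have he : (f T : ℤ) - ((M : ℤ) - r) - (w.val : ℤ) = 0 := by
          apply cd_int_help (q := ((n+1 : ℕ) : ℤ)) (by push_cast; omega) hdvd
          · push_cast; omega
          · push_cast; omega
        omega
  have hcard : (Finset.univ : Finset (ZMod (n+1))).card = n+1 := by
    rw [Finset.card_univ, ZMod.card]
  have hconst : ∑ _T : ZMod (n+1), (M : ℤ) = ((n:ℤ)+1) * M := by
    rw [Finset.sum_const, hcard]; push_cast; ring
  have hrsum : ∑ T : ZMod (n+1), (((M : ZMod (n+1)) - T).val : ℤ) = (V : ℤ) := by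
    have h1 : ∑ T : ZMod (n+1), ((M : ZMod (n+1)) - T).val = V := by
      have := Equiv.sum_comp (Equiv.subLeft ((M : ℕ) : ZMod (n+1))) (fun x : ZMod (n+1) => x.val)
      simpa [Equiv.subLeft] using this
    rw [← h1]
    exact (Nat.cast_sum _ _).symm
  have hGG : ∀ T : ZMod (n+1), (f T : ZMod (n+1)) - T = (∑ p, g p) + T := by
    intro T
    have h1 : (f T : ZMod (n+1)) = ∑ p, (g p - T) := by
      rw [hf, Nat.cast_sum]
      exact Finset.sum_congr rfl fun p _ => ZMod.natCast_rightInverse _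
    rw [h1, Finset.sum_sub_distrib, Finset.sum_const, Finset.card_univ, Fintype.card_fin,
      nsmul_eq_mul]
    have h2 : ((n - 1 : ℕ) : ZMod (n+1)) + 2 = 0 := by
      have h3 : ((n - 1 + 2 : ℕ) : ZMod (n+1)) = 0 := by
        rw [show n-1+2 = n+1 by omega]; exact ZMod.natCast_self _
      push_cast at h3
      linear_combination h3
    linear_combination (-T) * h2
  have hssum : ∑ T : ZMod (n+1), (if (f T : ZMod (n+1)) = T then ((n:ℤ)+1)
      else (((f T : ZMod (n+1)) - T).val : ℤ)) = ((n:ℤ)+1) + V := by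
    have h1 : ∀ T : ZMod (n+1), (if (f T : ZMod (n+1)) = T then ((n:ℤ)+1)
        else (((f T : ZMod (n+1)) - T).val : ℤ))
        = (fun x : ZMod (n+1) => if x = 0 then ((n:ℤ)+1) else (x.val : ℤ)) ((∑ p, g p) + T) := by
      intro T
      simp only
      rw [← hGG T]
      by_cases h : (f T : ZMod (n+1)) = T
      · rw [if_pos h, if_pos (sub_eq_zero_of_eq h)]
      · rw [if_neg h, if_neg (sub_ne_zero.mpr h)]
    rw [Finset.sum_congr rfl fun T _ => h1 T]
    have h2 := Equiv.sum_comp (Equiv.addLeft (∑ p, g p))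
      (fun x : ZMod (n+1) => if x = 0 then ((n:ℤ)+1) else (x.val : ℤ))
    rw [show (∑ T : ZMod (n+1), (fun x : ZMod (n+1) => if x = 0 then ((n:ℤ)+1) else (x.val : ℤ)) ((∑ p, g p) + T))
      = ∑ x : ZMod (n+1), (if x = 0 then ((n:ℤ)+1) else (x.val : ℤ)) from by
        simpa [Equiv.coe_addLeft] using h2]
    have h3 : ∀ x : ZMod (n+1), (if x = 0 then ((n:ℤ)+1) else (x.val : ℤ))
        = (x.val : ℤ) + (if x = 0 then ((n:ℤ)+1) else 0) := by
      intro x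
      by_cases h : x = 0
      · rw [if_pos h, if_pos h, h, ZMod.val_zero]; push_cast; ring
      · rw [if_neg h, if_neg h]; ring
    rw [Finset.sum_congr rfl fun x _ => h3 x, Finset.sum_add_distrib,
      Finset.sum_ite_eq' Finset.univ (0 : ZMod (n+1)), if_pos (Finset.mem_univ _), hV]
    push_cast
    ring
  have hrel : ((n-1) * V : ℕ) = (n+1) * M := by
    have h1 : 2*((n-1)*V) = 2*((n+1)*M) := by
      calc 2*((n-1)*V) = (n-1)*(2*V) := by ring
        _ = (n-1)*((n+1)*n) := by rw [hV2]
        _ = (n+1)*(n*(n-1)) := by ring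
        _ = (n+1)*(2*M) := by rw [hM]
        _ = 2*((n+1)*M) := by ring
    omega
  have hfin : ((n:ℤ)+1)*M - V + (((n:ℤ)+1) + V) ≤ ((n:ℤ)+1)*M := by
    calc ((n:ℤ)+1)*M - V + (((n:ℤ)+1) + V)
        = ∑ T : ZMod (n+1), (((M : ℤ) - (((M : ZMod (n+1)) - T).val : ℤ))
            + (if (f T : ZMod (n+1)) = T then ((n : ℤ)+1)
              else (((f T : ZMod (n+1)) - T).val : ℤ))) := by
          rw [Finset.sum_add_distrib, Finset.sum_sub_distrib, hconst, hrsum, hssum]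
      _ ≤ ∑ T : ZMod (n+1), (f T : ℤ) := Finset.sum_le_sum fun T _ => key T
      _ = (((n-1) * V : ℕ) : ℤ) := by rw [← Nat.cast_sum, hsumf]
      _ = ((n:ℤ)+1)*M := by rw [hrel]; push_cast; ring
  linarith

lemma cd_image (n : ℕ) (hn : 2 ≤ n) (w : ℕ) (hw1 : 1 ≤ w) (hwn : w ≤ n)
    (gp : ℕ → ℕ) (hgp : ∀ j, j < n-1 → 1 ≤ gp j ∧ gp j ≤ n ∧ gp j ≠ w)
    (hinj : ∀ j1 j2, j1 < n-1 → j2 < n-1 → gp j1 = gp j2 → j1 = j2)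
    (T : ZMod (n+1)) :
    ∑ p : Fin (n-1), (((gp (p : ℕ) : ℕ) : ZMod (n+1)) - T).val
      + ((((0:ℕ) : ZMod (n+1)) - T).val + (((w : ℕ) : ZMod (n+1)) - T).val)
      = ∑ x : ZMod (n+1), x.val := by
  have hcastinj : ∀ a c : ℕ, a ≤ n → c ≤ n → ((a : ZMod (n+1)) = (c : ZMod (n+1))) → a = c := by
    intro a c ha hc h
    have h2 := congrArg ZMod.val h
    rwa [ZMod.val_cast_of_lt (by omega), ZMod.val_cast_of_lt (by omega)] at h2
  set F : Fin (n-1) → ZMod (n+1) := fun p => ((gp (p : ℕ) : ℕ) : ZMod (n+1)) - T with hF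
  have hFinj : Function.Injective F := by
    intro p1 p2 h
    have h2 : ((gp (p1 : ℕ) : ℕ) : ZMod (n+1)) = ((gp (p2 : ℕ) : ℕ) : ZMod (n+1)) :=
      sub_left_inj.mp h
    exact Fin.ext (hinj _ _ p1.isLt p2.isLt
      (hcastinj _ _ (hgp _ p1.isLt).2.1 (hgp _ p2.isLt).2.1 h2))
  have hpairne : ((0:ℕ) : ZMod (n+1)) - T ≠ ((w : ℕ) : ZMod (n+1)) - T := by
    intro h
    have h2 := hcastinj 0 w (by omega) hwn (sub_left_inj.mp h)
    omega
  set P : Finset (ZMod (n+1)) := {((0:ℕ) : ZMod (n+1)) - T, ((w : ℕ) : ZMod (n+1)) - T} with hP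
  have himg : Finset.image F Finset.univ = Finset.univ \ P := by
    apply Finset.eq_of_subset_of_card_le
    · intro x hx
      obtain ⟨p, _, rfl⟩ := Finset.mem_image.mp hx
      rw [Finset.mem_sdiff]
      refine ⟨Finset.mem_univ _, ?_⟩
      rw [hP]
      simp only [Finset.mem_insert, Finset.mem_singleton]
      push_neg
      obtain ⟨h1, h2, h3⟩ := hgp (p : ℕ) p.isLt
      constructor
      · intro h
        have := hcastinj _ _ h2 (by omega) (sub_left_inj.mp h)
        omega
      · intro h
        exact h3 (hcastinj _ _ h2 hwn (sub_left_inj.mp h))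
    · have hcP : P.card = 2 := Finset.card_pair hpairne
      rw [Finset.card_sdiff_of_subset (Finset.subset_univ P), Finset.card_univ, ZMod.card, hcP,
        Finset.card_image_of_injective _ hFinj, Finset.card_univ, Fintype.card_fin]
      omega
  have hsum : ∑ p, (F p).val = ∑ x ∈ Finset.univ \ P, x.val := by
    rw [← himg, Finset.sum_image (fun p _ q _ h => hFinj h)]
  have hsdiff : ∑ x ∈ Finset.univ \ P, x.val + ∑ x ∈ P, x.val = ∑ x : ZMod (n+1), x.val :=
    Finset.sum_sdiff (Finset.subset_univ P)
  have hPsum : ∑ x ∈ P, x.val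
      = (((0:ℕ) : ZMod (n+1)) - T).val + (((w : ℕ) : ZMod (n+1)) - T).val :=
    Finset.sum_pair hpairne
  rw [show (∑ p : Fin (n-1), (((gp (p : ℕ) : ℕ) : ZMod (n+1)) - T).val) = ∑ p, (F p).val from rfl,
    hsum, ← hPsum]
  exact hsdiff

lemma cd_hard (n : ℕ) (hn : 2 ≤ n) (M : ℕ) (hM : 2*M = n*(n-1)) :
    ∃ g : Fin (n-1) → ZMod (n+1),
      ∀ N : ℕ, (∑ p, (g p - (N : ZMod (n+1))).val ≤ N) → M ≤ N := by
  have hV2 : 2 * (∑ x : ZMod (n+1), x.val) = (n+1)*n := cd_sum_val n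
  rcases Nat.even_or_odd n with he | ho
  · -- even case
    obtain ⟨e, hee⟩ := he
    have hd : n = 2*(e-1) + 2 := by omega
    set d := e - 1 with hdd
    set gp : ℕ → ℕ := fun j => j + 1 with hgp_def
    have hgp : ∀ j, j < n-1 → 1 ≤ gp j ∧ gp j ≤ n ∧ gp j ≠ n := by
      intro j hj; simp only [hgp_def]; omega
    have hinj : ∀ j1 j2, j1 < n-1 → j2 < n-1 → gp j1 = gp j2 → j1 = j2 := by
      intro j1 j2 _ _ h; simp only [hgp_def] at h; omega
    have hM2 : M = 1 + (n+1)*d := by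
      have hr1 : n*(n-1) = (2*d+2)*(2*d+1) := by
        rw [hd, show 2*d+2-1 = 2*d+1 from by omega]
      have hr2 : (2*d+2)*(2*d+1) = 2*(1+(2*d+3)*d) := by ring
      have hr3 : (n+1)*d = (2*d+3)*d := by rw [hd]
      omega
    refine ⟨fun p => ((gp (p : ℕ) : ℕ) : ZMod (n+1)), ?_⟩
    intro N hle
    by_contra hlt
    push_neg at hlt
    have hle' : ∑ p : Fin (n-1), (((gp (p : ℕ) : ℕ) : ZMod (n+1)) - ((N:ℕ) : ZMod (n+1))).val ≤ N := hle
    have himg := cd_image n hn n (by omega) le_rfl gp hgp hinj ((N:ℕ) : ZMod (n+1))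
    have hA0 : ((((0:ℕ)) : ZMod (n+1)) - ((N:ℕ) : ZMod (n+1))).val < n+1 := ZMod.val_lt _
    have hAw : ((((n:ℕ)) : ZMod (n+1)) - ((N:ℕ) : ZMod (n+1))).val < n+1 := ZMod.val_lt _
    have hVM : (∑ x : ZMod (n+1), x.val) = M + n := by
      have hr1 : n*(n-1) = (2*d+2)*(2*d+1) := by
        rw [hd, show 2*d+2-1 = 2*d+1 from by omega]
      have hv1 : (n+1)*n = (2*d+3)*(2*d+2) := by rw [hd]
      have hv2 : (2*d+3)*(2*d+2) = (2*d+2)*(2*d+1) + 2*(2*d+2) := by ring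
      omega
    have hj1 : 1 ≤ M - N := by omega
    have hjn : M - N ≤ n := by omega
    have hNj : N = M - (M - N) := by omega
    set j := M - N with hjd
    have hA0v : ((((0:ℕ)) : ZMod (n+1)) - ((N:ℕ) : ZMod (n+1))).val = j - 1 := by
      apply cd_val_sub_cast n N 0 (j-1) d (by omega)
      omega
    rcases eq_or_lt_of_le hj1 with hj1' | hj2
    · -- j = 1
      have hAwv : ((((n:ℕ)) : ZMod (n+1)) - ((N:ℕ) : ZMod (n+1))).val = n := by
        apply cd_val_sub_cast n N n n d (by omega)
        omega
      omega
    · -- j ≥ 2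
      have hd1 : 1 ≤ d := by
        rcases Nat.eq_zero_or_pos d with h0 | h0
        · rw [h0, Nat.mul_zero] at hM2; omega
        · exact h0
      have hsplit : (n+1)*d = (n+1)*(d-1) + (n+1) := by
        calc (n+1)*d = (n+1)*((d-1)+1) := by rw [Nat.sub_add_cancel hd1]
          _ = (n+1)*(d-1) + (n+1) := by ring
      have hAwv : ((((n:ℕ)) : ZMod (n+1)) - ((N:ℕ) : ZMod (n+1))).val = j - 2 := by
        apply cd_val_sub_cast n N n (j-2) (d-1) (by omega)
        omega
      omega
  · -- odd case
    obtain ⟨e, hee⟩ := ho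
    have hd : n = 2*(e-1) + 3 := by omega
    set a := e - 1 with haa
    set gp : ℕ → ℕ := fun j => if j + 1 < a + 2 then j + 1 else j + 2 with hgp_def
    have hgp : ∀ j, j < n-1 → 1 ≤ gp j ∧ gp j ≤ n ∧ gp j ≠ a + 2 := by
      intro j hj
      simp only [hgp_def]
      split_ifs <;> omega
    have hinj : ∀ j1 j2, j1 < n-1 → j2 < n-1 → gp j1 = gp j2 → j1 = j2 := by
      intro j1 j2 _ _ h
      simp only [hgp_def] at h
      split_ifs at h <;> omega
    have hM2 : M = (a+3) + (n+1)*a := by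
      have hr1 : n*(n-1) = (2*a+3)*(2*a+2) := by
        rw [hd, show 2*a+3-1 = 2*a+2 from by omega]
      have hr2 : (2*a+3)*(2*a+2) = 2*((a+3)+(2*a+4)*a) := by ring
      have hr3 : (n+1)*a = (2*a+4)*a := by rw [hd]
      omega
    refine ⟨fun p => ((gp (p : ℕ) : ℕ) : ZMod (n+1)), ?_⟩
    intro N hle
    by_contra hlt
    push_neg at hlt
    have hle' : ∑ p : Fin (n-1), (((gp (p : ℕ) : ℕ) : ZMod (n+1)) - ((N:ℕ) : ZMod (n+1))).val ≤ N := hle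
    have himg := cd_image n hn (a+2) (by omega) (by omega) gp hgp hinj ((N:ℕ) : ZMod (n+1))
    have hA0 : ((((0:ℕ)) : ZMod (n+1)) - ((N:ℕ) : ZMod (n+1))).val < n+1 := ZMod.val_lt _
    have hAw : ((((a+2:ℕ)) : ZMod (n+1)) - ((N:ℕ) : ZMod (n+1))).val < n+1 := ZMod.val_lt _
    have hVM : (∑ x : ZMod (n+1), x.val) = M + n := by
      have hr1 : n*(n-1) = (2*a+3)*(2*a+2) := by
        rw [hd, show 2*a+3-1 = 2*a+2 from by omega]
      have hv1 : (n+1)*n = (2*a+4)*(2*a+3) := by rw [hd]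
      have hv2 : (2*a+4)*(2*a+3) = (2*a+3)*(2*a+2) + 2*(2*a+3) := by ring
      omega
    have hj1 : 1 ≤ M - N := by omega
    have hjn : M - N ≤ n := by omega
    set j := M - N with hjd
    have hAwv : ((((a+2:ℕ)) : ZMod (n+1)) - ((N:ℕ) : ZMod (n+1))).val = j - 1 := by
      apply cd_val_sub_cast n N (a+2) (j-1) a (by omega)
      omega
    rcases le_or_gt j (a+2) with hja | hja
    · have hsplit : (n+1)*(a+1) = (n+1)*a + (n+1) := by ring
      have hA0v : ((((0:ℕ)) : ZMod (n+1)) - ((N:ℕ) : ZMod (n+1))).val = j+a+1 := by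
        apply cd_val_sub_cast n N 0 (j+a+1) (a+1) (by omega)
        omega
      omega
    · have hA0v : ((((0:ℕ)) : ZMod (n+1)) - ((N:ℕ) : ZMod (n+1))).val = j-(a+3) := by
        apply cd_val_sub_cast n N 0 (j-(a+3)) a (by omega)
        omega
      omega

theorem cayley_diameter (n : ℕ) (hn : 2 ≤ n)
    (b : Fin n → (Fin (n - 1) → ZMod (n + 1)))
    (hb : ∀ i p, b i p = if (i : ℕ) = (p : ℕ) + 1 then 2 else 1) :
    IsLeast {k : ℕ | ∀ g : Fin (n - 1) → ZMod (n + 1),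
        ∃ c : Fin n → ℕ, (∑ i, c i) ≤ k ∧ g = ∑ i, c i • b i}
      (n * (n - 1) / 2) := by
  have hdvd : 2 ∣ n * (n - 1) := by
    have he : Even ((n-1) * ((n-1)+1)) := Nat.even_mul_succ_self (n-1)
    rw [Nat.sub_add_cancel (by omega)] at he
    rw [mul_comm]
    exact he.two_dvd
  have hM : 2 * (n * (n - 1) / 2) = n * (n - 1) := Nat.mul_div_cancel' hdvd
  constructor
  · intro g
    obtain ⟨N, hN1, hN2⟩ := cd_exists_N n hn (n * (n - 1) / 2) hM g
    obtain ⟨c, hc1, hc2⟩ := cd_represent n hn b hb g N hN2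
    exact ⟨c, le_trans (le_of_eq hc1) hN1, hc2⟩
  · intro k hk
    obtain ⟨g, hg⟩ := cd_hard n hn (n * (n - 1) / 2) hM
    obtain ⟨c, hc1, hc2⟩ := hk g
    have h2 := cd_lower_N n hn b hb g c hc2
    exact le_trans (hg _ h2) hc1
end

section
/- The Cayley digraph of ℤ/mℤ ⊕ (ℤ/m(n+1)ℤ)^(n-1) with the n generators b_0 = (1,1,...,1) and b_j = (1, ..., 1, 2, 1, ..., 1) (2 in coordinate j+1) has diameter m·n(n+1)/2 - n. -/
open Finset


-- rearrangement lemma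
lemma sum_perm_range (P : ℕ) (e : ℕ → ℕ) (hmem : ∀ i < P, e i < P)
    (hinj : ∀ i < P, ∀ j < P, e i = e j → i = j) :
    ∑ i ∈ range P, e i = ∑ i ∈ range P, i := by
  have himg : (range P).image e = range P := by
    apply Finset.eq_of_subset_of_card_le
    · intro x hx
      simp only [mem_image, mem_range] at hx ⊢
      obtain ⟨i, hi, rfl⟩ := hx
      exact hmem i hi
    · rw [Finset.card_image_of_injOn (fun i hi j hj hij =>
        hinj i (mem_range.mp hi) j (mem_range.mp hj) hij)]
  calc ∑ i ∈ range P, e i = ∑ x ∈ (range P).image e, x := by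
        rw [Finset.sum_image]
        intro i hi j hj hij
        exact hinj i (mem_range.mp hi) j (mem_range.mp hj) hij
    _ = ∑ i ∈ range P, i := by rw [himg]

-- shift mod lemma
lemma sum_shift_mod (P a : ℕ) (hP : 0 < P) :
    ∑ i ∈ range P, (a + i) % P = ∑ i ∈ range P, i := by
  apply sum_perm_range
  · intro i _; exact Nat.mod_lt _ hP
  · intro i hi j hj hij
    have : i % P = j % P := Nat.ModEq.add_left_cancel' a hij
    rwa [Nat.mod_eq_of_lt hi, Nat.mod_eq_of_lt hj] at this

-- reverse version
lemma sum_rev_mod (P a c : ℕ) (hP : 0 < P) :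
    ∑ i ∈ range P, (c + P - (a + i) % P) % P = ∑ i ∈ range P, i := by
  apply sum_perm_range
  · intro i _; exact Nat.mod_lt _ hP
  · intro i hi j hj hij
    set A := (a + i) % P with hA
    set B := (a + j) % P with hB
    have hAP : A < P := Nat.mod_lt _ hP
    have hBP : B < P := Nat.mod_lt _ hP
    have h1 : (c + P - A) % P = (c + P - B) % P := hij
    have h2 : (c + P - A) + A = c + P := by omega
    have h3 : (c + P - B) + B = c + P := by omega
    have : A % P = B % P := by
      have e1 : (c + P - A) + A ≡ (c + P - B) + A [MOD P] := Nat.ModEq.add_right A h1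
      rw [h2] at e1
      have e2 : (c + P - B) + B ≡ (c + P - B) + A [MOD P] := by rw [h3]; exact e1
      exact (Nat.ModEq.add_left_cancel' _ e2).symm
    have hAB : A = B := by rwa [Nat.mod_eq_of_lt hAP, Nat.mod_eq_of_lt hBP] at this
    have : (a + i) % P = (a + j) % P := by rw [← hA, ← hB, hAB]
    have : i % P = j % P := Nat.ModEq.add_left_cancel' a this
    rwa [Nat.mod_eq_of_lt hi, Nat.mod_eq_of_lt hj] at this

-- final arithmetic cases, isolated
lemma lower_cases (k t v S N' a b j : ℕ) (hsplit : S + a + b = N')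
    (hN2 : N' * 2 = t*t + 5*t + 6) (hjlt : j < t + 3) (hvge : j ≤ v) (hv : 1 ≤ v)
    (hc : (j = 0 ∧ a = t+1 ∧ b = t+2 ∧ t+3 ≤ v) ∨ (j = 1 ∧ a = t+2 ∧ b = 0) ∨
          (2 ≤ j ∧ a = j - 2 ∧ b = j - 1)) :
    (k+1) * N' < (k+1) * v + (t+2) + ((k+1) * S + (t+1) * k) := by
  have e1 : (k+1) * N' = (k+1) * S + (k+1) * a + (k+1) * b := by rw [← hsplit]; ring
  rcases hc with ⟨_, hA, hB, hvP⟩ | ⟨_, hA, hB⟩ | ⟨hj2, hA, hB⟩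
  · have hmv : (k+1) * (t+3) ≤ (k+1) * v := Nat.mul_le_mul_left _ hvP
    subst hA hB
    nlinarith [hmv]
  · have hmv : (k+1) * 1 ≤ (k+1) * v := Nat.mul_le_mul_left _ hv
    subst hA hB
    nlinarith [hmv]
  · have hmv : (k+1) * j ≤ (k+1) * v := Nat.mul_le_mul_left _ hvge
    have hjt : (k+1) * j ≤ (k+1) * (t+2) := Nat.mul_le_mul_left _ (by omega)
    have hs1 : (k+1) * a + (k+1) * 2 = (k+1) * j := by
      rw [hA, ← Nat.mul_add]; congr 1; omega
    have hs2 : (k+1) * b + (k+1) * 1 = (k+1) * j := by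
      rw [hB, ← Nat.mul_add]; congr 1; omega
    nlinarith [hmv, hjt, hs1, hs2]

lemma lower_aux (t m v : ℕ) (hm : 1 ≤ m) (hv : 1 ≤ v) :
    m * ((t+2)*(t+3)/2) < m * v + (t+2) +
      ∑ p ∈ range (t+1), (m * ((v + p) % (t+3) + 1) - 1) := by
  obtain ⟨k, rfl⟩ : ∃ k, m = k + 1 := ⟨m - 1, by omega⟩
  set m := k + 1 with hmdef
  set P := t + 3 with hP
  have hP0 : 0 < P := by omega
  have hG : (∑ i ∈ range P, i) * 2 = P * (P - 1) := Finset.sum_range_id_mul_two P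
  set N' : ℕ := ∑ i ∈ range P, i with hN'
  have hN2 : N' * 2 = t*t + 5*t + 6 := by
    have h1 : P - 1 = t + 2 := by omega
    have h2 : P * (t+2) = t*t + 5*t + 6 := by simp only [hP]; ring
    rw [h1, h2] at hG; exact hG
  have hNval : (t+2)*(t+3)/2 = N' := by
    have hprod : (t+2)*(t+3) = t*t + 5*t + 6 := by ring
    omega
  rw [hNval]
  have hsummand : ∀ p, m * ((v + p) % P + 1) - 1 = m * ((v + p) % P) + k := by
    intro p
    have : m * ((v + p) % P + 1) = m * ((v + p) % P) + m := by ring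
    omega
  rw [Finset.sum_congr rfl (fun p _ => hsummand p), Finset.sum_add_distrib,
    ← Finset.mul_sum]
  simp only [Finset.sum_const, Finset.card_range, smul_eq_mul]
  set S : ℕ := ∑ p ∈ range (t+1), (v + p) % P with hS
  have hfull : ∑ p ∈ range P, (v + p) % P = N' := sum_shift_mod P v hP0
  set a := (v + (t+1)) % P with ha
  set b := (v + (t+2)) % P with hb
  have hsplit : S + a + b = N' := by
    have h3 : ∑ p ∈ range P, (v+p) % P
        = (∑ p ∈ range (t+1), (v+p) % P) + (v + (t+1)) % P + (v + (t+2)) % P := by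
      rw [show P = (t+1)+1+1 by omega, Finset.sum_range_succ, Finset.sum_range_succ]
    rw [← hS, ← ha, ← hb] at h3
    rw [← hfull, h3]
  set j := v % P with hj
  have hjlt : j < P := Nat.mod_lt _ hP0
  have hvge : j ≤ v := hj ▸ Nat.mod_le v P
  have hmod1 : a = (j + (t+1)) % P := by
    rw [ha, Nat.add_mod, ← hj, Nat.mod_eq_of_lt (show t+1 < P by omega)]
  have hmod2 : b = (j + (t+2)) % P := by
    rw [hb, Nat.add_mod, ← hj, Nat.mod_eq_of_lt (show t+2 < P by omega)]
  have hc : (j = 0 ∧ a = t+1 ∧ b = t+2 ∧ t+3 ≤ v) ∨ (j = 1 ∧ a = t+2 ∧ b = 0) ∨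
      (2 ≤ j ∧ a = j - 2 ∧ b = j - 1) := by
    rcases Nat.lt_or_ge j 2 with hj2 | hj2
    · interval_cases j
      · left
        refine ⟨rfl, ?_, ?_, ?_⟩
        · rw [hmod1, Nat.zero_add, Nat.mod_eq_of_lt (by omega)]
        · rw [hmod2, Nat.zero_add, Nat.mod_eq_of_lt (by omega)]
        · rcases Nat.lt_or_ge v P with h | h
          · exfalso; have := Nat.mod_eq_of_lt h; omega
          · omega
      · right; left
        refine ⟨rfl, ?_, ?_⟩
        · rw [hmod1, Nat.mod_eq_of_lt (by omega)]; omega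
        · rw [hmod2, show 1+(t+2) = P from by omega, Nat.mod_self]
    · right; right
      refine ⟨hj2, ?_, ?_⟩
      · rw [hmod1, show j+(t+1) = (j-2) + P from by omega, Nat.add_mod_right,
          Nat.mod_eq_of_lt (by omega)]
      · rw [hmod2, show j+(t+2) = (j-1) + P from by omega, Nat.add_mod_right,
          Nat.mod_eq_of_lt (by omega)]
  clear_value S N' a b j
  clear hS hN' ha hb hj hfull hmod1 hmod2 hG hsummand hNval
  exact lower_cases k t v S N' a b j hsplit hN2 hjlt hvge hv hc


lemma pigeon_final (t m xb C1 V N' R : ℕ) (A' : ℤ) (hm : 1 ≤ m)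
    (hA'1 : (xb:ℤ) + 1 - R ≤ m * A')
    (hC1b : m*C1 ≤ t+1+xb+m)
    (hVdef : V + (t+2) + C1 = N')
    (hRbound : R + (t+1) ≤ (t+1)*m)
    (hN2 : N' * 2 = t*t + 5*t + 6)
    (hmaster : (N' : ℤ) + (t+3) * V + (t+3) * A' ≤ t * N') : False := by
  have hmZ : (0:ℤ) < m := by exact_mod_cast (show 0 < m by omega)
  have h1 : (m:ℤ)*((N' : ℤ) + (t+3) * V + (t+3) * A') ≤ m*(t * N') :=
    mul_le_mul_of_nonneg_left hmaster (by positivity)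
  have hVZ : (V:ℤ) + (t+2) + C1 = N' := by exact_mod_cast hVdef
  have hC1Z : (m:ℤ)*C1 ≤ t+1+xb+m := by exact_mod_cast hC1b
  have hRZ : (R:ℤ) + (t+1) ≤ (t+1)*m := by exact_mod_cast hRbound
  have hN2Z : (N':ℤ) * 2 = t*t+5*t+6 := by exact_mod_cast hN2
  have h3 : (m:ℤ)*V + m*(t+2) + m*C1 = m*N' := by linear_combination (m:ℤ) * hVZ
  have p1 : ((t:ℤ)+3)*((m:ℤ)*V) + ((t:ℤ)+3)*((m:ℤ)*(t+2)) + ((t:ℤ)+3)*((m:ℤ)*C1)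
      = ((t:ℤ)+3)*((m:ℤ)*N') := by linear_combination ((t:ℤ)+3) * h3
  have p2 : ((t:ℤ)+3)*((xb:ℤ) + 1 - R) ≤ ((t:ℤ)+3)*((m:ℤ)*A') :=
    mul_le_mul_of_nonneg_left hA'1 (by positivity)
  have p3 : ((t:ℤ)+3)*((m:ℤ)*C1) ≤ ((t:ℤ)+3)*((t:ℤ)+1+xb+m) :=
    mul_le_mul_of_nonneg_left hC1Z (by positivity)
  have p4 : ((t:ℤ)+3)*((R:ℤ)+(t+1)) ≤ ((t:ℤ)+3)*(((t:ℤ)+1)*m) :=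
    mul_le_mul_of_nonneg_left hRZ (by positivity)
  have hN2M : (m:ℤ) * ((N':ℤ)*2) = m * ((t:ℤ)*t+5*t+6) := by
    linear_combination (m:ℤ) * hN2Z
  nlinarith [h1, p1, p2, p3, p4, hN2M, hmZ]

set_option maxHeartbeats 1000000 in
lemma pigeonT (t m xb : ℕ) (ht : 1 ≤ t) (hm : 1 ≤ m) (hx : xb < m)
    (q ρ : Fin (t+1) → ℕ) (hρ : ∀ p, ρ p < m) :
    ∃ u : ℕ, (∑ p, (ρ p + m * ((q p + (t+3) - u % (t+3)) % (t+3)))) ≤ xb + m * u ∧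
      xb + m * u + (t+2) ≤ m * ((t+2)*(t+3)/2) := by
  set P := t + 3 with hP
  have hP0 : 0 < P := by omega
  have hG : (∑ i ∈ range P, i) * 2 = P * (P - 1) := Finset.sum_range_id_mul_two P
  set N' : ℕ := ∑ i ∈ range P, i with hN'
  have hN2 : N' * 2 = t*t + 5*t + 6 := by
    have h1 : P - 1 = t + 2 := by omega
    have h2 : P * (t+2) = t*t + 5*t + 6 := by simp only [hP]; ring
    rw [h1, h2] at hG; exact hG
  have hNval : (t+2)*(t+3)/2 = N' := by
    have hprod : (t+2)*(t+3) = t*t + 5*t + 6 := by ring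
    omega
  rw [hNval]
  -- C1 = ceil((t+2+xb)/m)
  set C1 := (t+1+xb+m)/m with hC1
  have hdm := Nat.div_add_mod (t+1+xb+m) m
  have hmod := Nat.mod_lt (t+1+xb+m) (show 0 < m by omega)
  have hC1a : t+2+xb ≤ m*C1 := by rw [hC1]; omega
  have hC1b : m*C1 ≤ t+1+xb+m := by rw [hC1]; omega
  have hC1c : C1 ≤ t+2 := by
    by_contra hcon
    push_neg at hcon
    have h1 : m*(t+3) ≤ m*C1 := Nat.mul_le_mul_left m hcon
    have h2 : t ≤ m*t := Nat.le_mul_of_pos_left t (by omega)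
    nlinarith
  have htt : t ≤ t*t := Nat.le_mul_of_pos_left t (by omega)
  have hC1N : C1 + (t+2) ≤ N' := by omega
  set V := N' - (t+2) - C1 with hV
  have hVdef : V + (t+2) + C1 = N' := by omega
  -- abbreviations
  set T : ℕ → ℕ := fun u => ∑ p : Fin (t+1), (q p + P - u % P) % P with hT
  set R : ℕ := ∑ p : Fin (t+1), ρ p with hR
  have hRbound : R + (t+1) ≤ (t+1) * m := by
    have h1 : R ≤ (t+1) * (m-1) := by
      rw [hR]
      calc ∑ p : Fin (t+1), ρ p ≤ ∑ _p : Fin (t+1), (m-1) :=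
            Finset.sum_le_sum (fun p _ => by have := hρ p; omega)
        _ = (t+1) * (m-1) := by simp [Finset.sum_const, mul_comm]
    have h2 : (t+1) * (m-1) + (t+1) = (t+1) * m := by
      have h3 : m - 1 + 1 = m := by omega
      calc (t+1)*(m-1) + (t+1) = (t+1)*((m-1)+1) := by ring
        _ = (t+1)*m := by rw [h3]
    omega
  have hsum_eq : ∀ u : ℕ, (∑ p, (ρ p + m * ((q p + P - u % P) % P))) = R + m * T u := by
    intro u
    rw [Finset.sum_add_distrib, ← Finset.mul_sum, hR, hT]
  by_contra hcon
  push_neg at hcon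
  -- second condition holds on the window
  have hB : ∀ i, i ≤ t+2 → xb + m*(V+i) + (t+2) ≤ m * N' := by
    intro i hi
    have h1 : m*((V+i)+C1) ≤ m*N' := Nat.mul_le_mul_left m (by omega)
    rw [Nat.mul_add] at h1
    linarith
  have hfail : ∀ i, i ≤ t+2 → xb + m*(V+i) + 1 ≤ R + m * T (V+i) := by
    intro i hi
    have h2 := hcon (V+i)
    rw [hsum_eq] at h2
    have := hB i hi
    by_contra h3
    push_neg at h3
    exact absurd (h2 (by omega)) (by omega)
  -- move to ℤ
  set J : ℕ → ℤ := fun i => (T (V+i) : ℤ) - (V+i) with hJ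
  set A' : ℤ := ((xb : ℤ) + m - R) / m with hA'
  have hmZ : (0:ℤ) < m := by exact_mod_cast (show 0 < m by omega)
  have hA'1 : (xb:ℤ) + 1 - R ≤ m * A' := by
    have h1 := Int.mul_ediv_add_emod ((xb : ℤ) + m - R) m
    have h2 := Int.emod_lt_of_pos ((xb : ℤ) + m - R) hmZ
    have h3 := Int.emod_nonneg ((xb : ℤ) + m - R) (by omega : (m:ℤ) ≠ 0)
    rw [hA']; linarith
  have hJA : ∀ i, i ≤ t+2 → A' ≤ J i := by
    intro i hi
    have h1 := hfail i hi
    have h2 : (xb:ℤ) + m*(V+i) + 1 ≤ R + m * T (V+i) := by exact_mod_cast h1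
    have h3 : (xb:ℤ) + 1 - R ≤ m * J i := by rw [hJ]; push_cast; ring_nf; ring_nf at h2; linarith
    have h4 : (xb:ℤ) + m - R ≤ m * J i + (m - 1) := by linarith
    have h5 : A' ≤ (m * J i + (m-1)) / m := by
      rw [hA']; exact Int.ediv_le_ediv hmZ h4
    have h6 : (m * J i + (m-1)) / m = J i := by
      rw [add_comm, Int.add_mul_ediv_left _ _ (by omega : (m:ℤ) ≠ 0),
        Int.ediv_eq_zero_of_lt (by omega) (by omega)]
      ring
    rwa [h6] at h5
  -- residues
  set Q : ℤ := ∑ p : Fin (t+1), (q p : ℤ) with hQ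
  have hTmod : ∀ u : ℕ, ((T u : ℤ)) % P = (Q - (t+1) * u) % P := by
    intro u
    have step1 : ∀ p : Fin (t+1),
        ((((q p + P - u % P) % P : ℕ)):ℤ) % P = ((q p : ℤ) - u) % P := by
      intro p
      have hult : u % P < P := Nat.mod_lt u hP0
      have hle : u % P ≤ q p + P := by omega
      rw [Int.natCast_mod]
      rw [Int.emod_emod_of_dvd _ dvd_rfl]
      rw [Nat.cast_sub hle]
      have e1 : ((u % P : ℕ) : ℤ) = (u:ℤ) % P := Int.natCast_mod u P
      rw [e1]
      have h2 : ((q p : ℤ) + P - (u:ℤ) % P) ≡ ((q p : ℤ) + 0 - u) [ZMOD (P:ℤ)] := by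
        apply Int.ModEq.sub
        · exact Int.ModEq.add (Int.ModEq.refl _) (Int.modEq_zero_iff_dvd.mpr dvd_rfl)
        · exact Int.emod_emod_of_dvd _ dvd_rfl
      have h3 : ((q p : ℤ) + 0 - u) = (q p : ℤ) - u := by ring
      rw [h3] at h2
      rw [Nat.cast_add] at h2 ⊢
      exact h2
    have hTc : ((T u : ℤ)) = ∑ p : Fin (t+1), ((((q p + P - u % P) % P : ℕ)):ℤ) := by
      rw [hT]; push_cast; rfl
    rw [hTc, Finset.sum_int_mod]
    rw [Finset.sum_congr rfl (fun p _ => step1 p)]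
    rw [← Finset.sum_int_mod]
    congr 1
    rw [Finset.sum_sub_distrib, hQ]
    simp [Finset.sum_const, Finset.card_univ, mul_comm]
  -- J i mod P
  have hPZ2 : ((P:ℕ):ℤ) = (t:ℤ)+3 := by rw [hP]; push_cast; ring
  have hJmodEq : ∀ i : ℕ, J i ≡ Q + V + i [ZMOD ((P:ℕ):ℤ)] := by
    intro i
    have h1 : ((T (V+i) : ℤ)) ≡ Q - ((t:ℤ)+1) * ((V+i : ℕ):ℤ) [ZMOD ((P:ℕ):ℤ)] := by
      have := hTmod (V+i)
      unfold Int.ModEq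
      push_cast at this ⊢
      convert this using 2 <;> push_cast <;> ring
    have h2 : J i ≡ Q - ((t:ℤ)+1) * ((V+i:ℕ):ℤ) - ((V:ℤ)+i) [ZMOD ((P:ℕ):ℤ)] :=
      Int.ModEq.sub h1 (Int.ModEq.refl _)
    have h4 : Q - ((t:ℤ)+1)*((V+i:ℕ):ℤ) - ((V:ℤ)+i)
        = (Q + ((V:ℤ)+i)) - ((t:ℤ)+3)*((V:ℤ)+i) := by push_cast; ring
    rw [h4] at h2
    have h3 : ((t:ℤ)+3)*((V:ℤ)+i) ≡ 0 [ZMOD ((P:ℕ):ℤ)] := by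
      rw [← hPZ2] at *
      show (((P:ℕ):ℤ))*((V:ℤ)+i) % _ = 0 % _
      simp [Int.mul_emod_right]
    have h5 := Int.ModEq.sub (Int.ModEq.refl (Q + ((V:ℤ)+i))) h3
    have h6 : Q + ((V:ℤ)+i) - 0 = Q + V + i := by ring
    rw [h6] at h5
    exact h2.trans h5
  -- injectivity consequence
  have hJmod : ∀ i j, i ≤ t+2 → j ≤ t+2 →
      (J i - A') % P = (J j - A') % P → i = j := by
    intro i j hi hj h
    have e1 : J i - A' ≡ Q + V + i - A' [ZMOD ((P:ℕ):ℤ)] := (hJmodEq i).sub_right A'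
    have e2 : J j - A' ≡ Q + V + j - A' [ZMOD ((P:ℕ):ℤ)] := (hJmodEq j).sub_right A'
    have hm0 : J i - A' ≡ J j - A' [ZMOD ((P:ℕ):ℤ)] := h
    have t1 : Q + (V:ℤ) + i - A' ≡ Q + V + j - A' [ZMOD ((P:ℕ):ℤ)] :=
      e1.symm.trans (hm0.trans e2)
    rw [show Q + (V:ℤ) + (i:ℤ) - A' = (Q + V - A') + i from by ring,
      show Q + (V:ℤ) + (j:ℤ) - A' = (Q + V - A') + j from by ring] at t1
    have t2 : (i:ℤ) ≡ j [ZMOD ((P:ℕ):ℤ)] := Int.ModEq.add_left_cancel' _ t1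
    have t3 : (i:ℤ) % P = (j:ℤ) % P := t2
    rw [Int.emod_eq_of_lt (by positivity) (by exact_mod_cast (show i < P by omega)),
      Int.emod_eq_of_lt (by positivity) (by exact_mod_cast (show j < P by omega))] at t3
    exact_mod_cast t3
  -- n_i
  set nn : ℕ → ℕ := fun i => ((J i - A') % P).toNat with hnn
  have hPne : ((P:ℤ)) ≠ 0 := by exact_mod_cast hP0.ne'
  have hPZ : (0:ℤ) < P := by exact_mod_cast hP0
  have hJnonneg : ∀ i, i ≤ t+2 → 0 ≤ J i - A' := fun i hi => by have := hJA i hi; linarith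
  have hn_cast : ∀ i, (nn i : ℤ) = (J i - A') % P := by
    intro i
    rw [hnn]
    exact Int.toNat_of_nonneg (Int.emod_nonneg _ hPne)
  have hn_lt : ∀ i, i < P → nn i < P := by
    intro i hi
    have h1 := Int.emod_lt_of_pos (J i - A') hPZ
    rw [← hn_cast i] at h1
    exact_mod_cast h1
  have hn_le : ∀ i, i ≤ t+2 → (nn i : ℤ) ≤ J i - A' := by
    intro i hi
    have h0 := hJnonneg i hi
    have h3 := Int.mul_ediv_add_emod (J i - A') P
    have h4 : 0 ≤ (J i - A') / P := Int.ediv_nonneg h0 (by exact_mod_cast hP0.le)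
    have h5 : 0 ≤ (P:ℤ) * ((J i - A') / P) := mul_nonneg (by exact_mod_cast hP0.le) h4
    rw [hn_cast i]; linarith
  have hn_sum : ∑ i ∈ range P, nn i = N' := by
    rw [hN']
    apply sum_perm_range
    · exact hn_lt
    · intro i hi j hj hij
      apply hJmod i j (by omega) (by omega)
      rw [← hn_cast i, ← hn_cast j, hij]
  -- sum of T over window
  have hTsum : ∑ i ∈ range P, T (V+i) = (t+1) * N' := by
    rw [hT]
    simp only
    rw [Finset.sum_comm]
    have : ∀ p : Fin (t+1), ∑ i ∈ range P, (q p + P - (V+i) % P) % P = N' := by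
      intro p
      rw [hN']
      exact sum_rev_mod P V (q p) hP0
    rw [Finset.sum_congr rfl (fun p _ => this p)]
    simp [Finset.sum_const, mul_comm]
  -- master inequality
  have hmaster : (N' : ℤ) + P * V + P * A' ≤ t * N' := by
    have h1 : ∑ i ∈ range P, (J i - A') ≥ ∑ i ∈ range P, (nn i : ℤ) := by
      apply Finset.sum_le_sum
      intro i hi
      exact hn_le i (by have := mem_range.mp hi; omega)
    have h2 : ∑ i ∈ range P, (nn i : ℤ) = (N' : ℤ) := by
      rw [← Nat.cast_sum]
      exact_mod_cast congrArg (Nat.cast : ℕ → ℤ) hn_sum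
    have h3 : ∑ i ∈ range P, (J i - A') = (∑ i ∈ range P, J i) - P * A' := by
      rw [Finset.sum_sub_distrib]
      simp [Finset.sum_const, Finset.card_range, mul_comm]
    have h4 : ∑ i ∈ range P, J i = (t:ℤ) * N' - P * V := by
      rw [hJ]
      simp only
      rw [Finset.sum_sub_distrib]
      have h5 : ∑ i ∈ range P, ((T (V+i) : ℤ)) = ((t+1) * N' : ℕ) := by
        rw [← Nat.cast_sum, hTsum]
      have h6 : ∑ i ∈ range P, ((V:ℤ)+i) = P * V + N' := by
        rw [Finset.sum_add_distrib]
        simp only [Finset.sum_const, Finset.card_range, smul_eq_mul]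
        have : ∑ i ∈ range P, (i:ℤ) = (N' : ℤ) := by
          rw [← Nat.cast_sum, hN']
        rw [this]; push_cast [hP]; ring
      rw [h5, h6]; push_cast; ring
    rw [h3, h4] at h1
    rw [h2] at h1
    linarith
  -- final contradiction
  have hmaster' : (N' : ℤ) + ((t:ℤ)+3) * V + ((t:ℤ)+3) * A' ≤ t * N' := by
    have hPcast : ((P:ℕ):ℤ) = (t:ℤ)+3 := by rw [hP]; push_cast; ring
    rw [← hPcast]; exact hmaster
  exact pigeon_final t m xb C1 V N' R A' hm hA'1 hC1b hVdef hRbound hN2 hmaster'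

lemma pigeon0 (m xb : ℕ) (hm : 1 ≤ m) (hx : xb < m)
    (q ρ : Fin 1 → ℕ) (hq : ∀ p, q p < 3) (hρ : ∀ p, ρ p < m) :
    ∃ u : ℕ, (∑ p, (ρ p + m * ((q p + 3 - u % 3) % 3))) ≤ xb + m * u ∧
      xb + m * u + 2 ≤ m * ((2*3)/2) := by
  simp only [Fin.sum_univ_one]
  have hq0 := hq 0
  have hr0 := hρ 0
  norm_num
  by_cases hrx : ρ 0 ≤ xb
  · refine ⟨min (q 0) 1, ?_, ?_⟩
    · interval_cases h : q 0 <;> simp <;> omega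
    · interval_cases h : q 0 <;> simp <;> omega
  · refine ⟨if q 0 = 1 then 1 else 2, ?_, ?_⟩
    · interval_cases h : q 0 <;> simp <;> omega
    · interval_cases h : q 0 <;> simp <;> omega

lemma pigeonW (t m xb : ℕ) (hm : 1 ≤ m) (hx : xb < m)
    (q ρ : Fin (t+1) → ℕ) (hq : ∀ p, q p < t+3) (hρ : ∀ p, ρ p < m) :
    ∃ u : ℕ, (∑ p, (ρ p + m * ((q p + (t+3) - u % (t+3)) % (t+3)))) ≤ xb + m * u ∧
      xb + m * u + (t+2) ≤ m * ((t+2)*(t+3)/2) := by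
  rcases Nat.eq_zero_or_pos t with rfl | ht
  · simpa using pigeon0 m xb hm hx q ρ (by simpa using hq) hρ
  · exact pigeonT t m xb ht hm hx q ρ hρ

lemma core (t m : ℕ) (hm : 1 ≤ m) (xb : ℕ) (hx : xb < m) (v : Fin (t+1) → ℕ) :
    ∃ (s : ℕ) (r : Fin (t+1) → ℕ),
      s % m = xb ∧ (∑ p, r p) ≤ s ∧ s + (t+2) ≤ m * ((t+2)*(t+3)/2) ∧
      ∀ p, (s + r p) ≡ v p [MOD m*(t+3)] := by
  have hm0 : 0 < m := hm
  set M := m * (t+3) with hMdef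
  have hM0 : 0 < M := by positivity
  set d : Fin (t+1) → ℕ := fun p => (v p + M - xb) % M with hd
  have hdlt : ∀ p, d p < M := fun p => Nat.mod_lt _ hM0
  set q : Fin (t+1) → ℕ := fun p => d p / m with hq'
  set ρ : Fin (t+1) → ℕ := fun p => d p % m with hρ'
  have hq : ∀ p, q p < t+3 := by
    intro p
    rw [hq']
    exact Nat.div_lt_of_lt_mul (hdlt p)
  have hρ : ∀ p, ρ p < m := fun p => Nat.mod_lt _ hm0
  obtain ⟨u, hu1, hu2⟩ := pigeonW t m xb hm hx q ρ hq hρ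
  set P3 := t + 3 with hP3
  refine ⟨xb + m*u, fun p => ρ p + m * ((q p + P3 - u % P3) % P3), ?_, hu1, hu2, ?_⟩
  · rw [Nat.add_mul_mod_self_left, Nat.mod_eq_of_lt hx]
  · intro p
    set w := (q p + P3 - u % P3) % P3 with hw
    set z := u % P3 with hz
    have hzlt : z < P3 := Nat.mod_lt _ (by omega)
    have hzle : z ≤ u := Nat.mod_le u P3
    -- u + w ≡ q p [MOD P3]
    have s1 : u + w ≡ u + (q p + P3 - z) [MOD P3] :=
      Nat.ModEq.add_left u (Nat.mod_modEq _ P3)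
    have s2 : u + (q p + P3 - z) = (q p + P3) + (u - z) := by omega
    have s3 : (u - z) ≡ 0 [MOD P3] := by
      show (u - z) % P3 = 0 % P3
      rw [Nat.zero_mod]
      apply Nat.sub_mod_eq_zero_of_mod_eq
      rw [hz, Nat.mod_mod_of_dvd _ dvd_rfl]
    have s4 : P3 ≡ 0 [MOD P3] := Nat.modEq_zero_iff_dvd.mpr dvd_rfl
    have s5 : (q p + P3) + (u - z) ≡ (q p + 0) + 0 [MOD P3] :=
      Nat.ModEq.add (Nat.ModEq.add_left (q p) s4) s3
    have s6 : u + w ≡ q p [MOD P3] := by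
      have := (s1.trans (s2 ▸ s5))
      simpa using this
    -- multiply by m
    have s7 : m * (u + w) ≡ m * q p [MOD M] := s6.mul_left' m
    have s8 : (xb + m*u) + (ρ p + m * w) = (xb + ρ p) + m * (u + w) := by ring
    have s9 : (xb + ρ p) + m * (u + w) ≡ (xb + ρ p) + m * q p [MOD M] :=
      Nat.ModEq.add_left _ s7
    have s10 : (xb + ρ p) + m * q p = xb + d p := by
      have h1 : ρ p = d p % m := rfl
      have h2 : q p = d p / m := rfl
      rw [h1, h2]
      linarith [Nat.div_add_mod (d p) m]
    -- xb + d p ≡ v p [MOD M]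
    have s11 : xb + d p ≡ xb + (v p + M - xb) [MOD M] :=
      Nat.ModEq.add_left xb (Nat.mod_modEq _ M)
    have s12 : xb + (v p + M - xb) = v p + M := by
      have : xb < M := by
        calc xb < m := hx
          _ ≤ M := by rw [hMdef]; nlinarith
      omega
    have s13 : v p + M ≡ v p + 0 [MOD M] :=
      Nat.ModEq.add_left _ (Nat.modEq_zero_iff_dvd.mpr dvd_rfl)
    calc (xb + m*u) + (ρ p + m * w) = (xb + ρ p) + m * (u + w) := s8
      _ ≡ (xb + ρ p) + m * q p [MOD M] := s9
      _ = xb + d p := s10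
      _ ≡ xb + (v p + M - xb) [MOD M] := s11
      _ = v p + M := s12
      _ ≡ v p + 0 [MOD M] := s13
      _ = v p := by ring

lemma gen_sum (t m : ℕ)
    (b : Fin (t+2) → (ZMod m × (Fin (t+1) → ZMod (m*(t+3)))))
    (hb : ∀ i, b i = (1, fun p : Fin (t+1) => if (i : ℕ) = (p : ℕ) + 1 then 2 else 1))
    (c : Fin (t+2) → ℕ) :
    ∑ i, c i • b i = (((∑ i, c i : ℕ) : ZMod m),
      fun p : Fin (t+1) => (((∑ i, c i) + c p.succ : ℕ) : ZMod (m*(t+3)))) := by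
  apply Prod.ext
  · rw [Prod.fst_sum]
    push_cast
    apply Finset.sum_congr rfl
    intro i _
    rw [hb i]
    simp [nsmul_eq_mul]
  · rw [Prod.snd_sum]
    funext p
    rw [Finset.sum_apply]
    have hterm : ∀ i : Fin (t+2), (c i • b i).2 p
        = (c i : ZMod (m*(t+3))) + (if i = p.succ then (c i : ZMod (m*(t+3))) else 0) := by
      intro i
      rw [hb i]
      simp only [Prod.smul_snd, Pi.smul_apply]
      have hcond : ((i : ℕ) = (p : ℕ) + 1) ↔ (i = p.succ) := by
        rw [Fin.ext_iff, Fin.val_succ]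
      by_cases h : i = p.succ
      · rw [if_pos (hcond.mpr h), if_pos h]
        simp [nsmul_eq_mul]; ring
      · rw [if_neg (fun hc => h (hcond.mp hc)), if_neg h]
        simp [nsmul_eq_mul]
    rw [Finset.sum_congr rfl (fun i _ => hterm i), Finset.sum_add_distrib]
    rw [Finset.sum_ite_eq' Finset.univ p.succ (fun i => (c i : ZMod (m*(t+3))))]
    simp only [Finset.mem_univ, if_true]
    push_cast
    ring

set_option maxHeartbeats 1000000 in
theorem cayley_diameter_m (n m : ℕ) (hn : 2 ≤ n) (hm : 1 ≤ m)
    (b : Fin n → (ZMod m × (Fin (n - 1) → ZMod (m * (n + 1)))))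
    (hb : ∀ i, b i = (1, fun p : Fin (n - 1) => if (i : ℕ) = (p : ℕ) + 1 then 2 else 1)) :
    IsLeast {k : ℕ | ∀ g : ZMod m × (Fin (n - 1) → ZMod (m * (n + 1))),
        ∃ c : Fin n → ℕ, (∑ i, c i) ≤ k ∧ g = ∑ i, c i • b i}
      (m * (n * (n + 1) / 2) - n) := by
  obtain ⟨t, rfl⟩ : ∃ t, n = t + 2 := ⟨n - 2, by omega⟩
  haveI : NeZero m := ⟨by omega⟩
  haveI : NeZero (m * (t + 2 + 1)) := ⟨by positivity⟩
  have hb' : ∀ i : Fin (t+2), b i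
      = (1, fun p : Fin (t+1) => if (i : ℕ) = (p : ℕ) + 1 then 2 else 1) := hb
  -- numeric facts
  have hnorm : (t+2) * (t+2+1) / 2 = (t+2)*(t+3)/2 := by norm_num
  have hN2 : ((t+2)*(t+3)/2) * 2 = (t+2)*(t+3) := by
    have h0 := (Nat.even_mul_succ_self (t+2)).two_dvd
    have e : (t+2)*(t+2+1) = (t+2)*(t+3) := by ring
    rw [e] at h0
    omega
  have hNn : t + 2 ≤ (t+2)*(t+3)/2 := by
    have h1 : (t+2)*(t+3) = t*t+5*t+6 := by ring
    omega
  have hmN : (t+2)*(t+3)/2 ≤ m * ((t+2)*(t+3)/2) :=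
    Nat.le_mul_of_pos_left _ (by omega)
  constructor
  · -- membership
    intro g
    obtain ⟨x, y⟩ := g
    have hx : x.val < m := ZMod.val_lt x
    obtain ⟨s, r, hs1, hs2, hs3, hs4⟩ := core t m hm x.val hx (fun p => (y p).val)
    refine ⟨Fin.cons (s - ∑ p, r p) r, ?_, ?_⟩
    · rw [Fin.sum_cons]
      have hsum : (s - ∑ p, r p) + ∑ p, r p = s := by omega
      rw [hsum, hnorm]
      omega
    · rw [gen_sum t m b hb']
      have hsum : ∑ i, (Fin.cons (s - ∑ p, r p) r : Fin (t+2) → ℕ) i = s := by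
        rw [Fin.sum_cons]; omega
      rw [hsum]
      apply Prod.ext
      · show x = ((s : ℕ) : ZMod m)
        have h1 : ((s : ℕ) : ZMod m) = ((s % m : ℕ) : ZMod m) := (ZMod.natCast_mod s m).symm
        rw [h1, hs1]
        exact (ZMod.natCast_rightInverse x).symm
      · show y = _
        funext p
        show y p = ((s + (Fin.cons (s - ∑ p, r p) r : Fin (t+2) → ℕ) p.succ : ℕ)
          : ZMod (m*(t+3)))
        rw [Fin.cons_succ]
        have h2 : (((y p).val : ℕ) : ZMod (m*(t+3)))
            = ((s + r p : ℕ) : ZMod (m*(t+3))) :=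
          ((ZMod.natCast_eq_natCast_iff _ _ _).mpr (hs4 p)).symm
        exact ((ZMod.natCast_rightInverse (y p)).symm.trans h2)
  · -- lower bound
    intro k hk
    show m * ((t+2) * (t+2+1) / 2) - (t+2) ≤ k
    rw [hnorm]
    by_contra hcon
    push_neg at hcon
    obtain ⟨c, hc1, hc2⟩ := hk (((m * ((t+2)*(t+3)/2) - (t+2) : ℕ) : ZMod m),
      fun p : Fin (t+1) =>
        (((m * ((t+2)*(t+3)/2) - (t+2)) + (m*((p:ℕ)+1) - 1) : ℕ) : ZMod (m * (t+3))))
    set σ := ∑ i, c i with hσ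
    rw [gen_sum t m b hb'] at hc2
    rw [Prod.ext_iff] at hc2
    obtain ⟨hcfst, hcsnd⟩ := hc2
    have hσk : σ ≤ k := hc1
    have hsigK : σ < m * ((t+2)*(t+3)/2) - (t+2) := by omega
    have hKmod : m * ((t+2)*(t+3)/2) - (t+2) ≡ σ [MOD m] := by
      have h1 : ((m * ((t+2)*(t+3)/2) - (t+2) : ℕ) : ZMod m) = ((σ:ℕ) : ZMod m) := hcfst
      exact (ZMod.natCast_eq_natCast_iff _ _ _).mp h1
    obtain ⟨v, hv⟩ : ∃ v, (m * ((t+2)*(t+3)/2) - (t+2)) - σ = m * v :=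
      (Nat.modEq_iff_dvd' (le_of_lt hsigK)).mp hKmod.symm
    have hv1 : 1 ≤ v := by
      rcases Nat.eq_zero_or_pos v with rfl | h
      · omega
      · exact h
    -- per-coordinate lower bound on c p.succ
    have hclow : ∀ p : Fin (t+1), m * ((v + (p:ℕ)) % (t+3) + 1) - 1 ≤ c p.succ := by
      intro p
      have hWlt : m * ((v + (p:ℕ)) % (t+3) + 1) - 1 < m * (t+3) := by
        have h1 : (v + (p:ℕ)) % (t+3) < t+3 := Nat.mod_lt _ (by omega)
        have h2 : m * ((v + (p:ℕ)) % (t+3) + 1) ≤ m * (t+3) := Nat.mul_le_mul_left m (by omega)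
        have h3 : 1 ≤ m * ((v + (p:ℕ)) % (t+3) + 1) :=
          Nat.one_le_iff_ne_zero.mpr (by positivity)
        omega
      have hcong : (m * ((t+2)*(t+3)/2) - (t+2)) + (m*((p:ℕ)+1) - 1)
          ≡ σ + c p.succ [MOD m*(t+3)] := by
        have h1 : (((m * ((t+2)*(t+3)/2) - (t+2)) + (m*((p:ℕ)+1) - 1) : ℕ) : ZMod (m*(t+3)))
            = ((σ + c p.succ : ℕ) : ZMod (m*(t+3))) := congrFun hcsnd p
        exact (ZMod.natCast_eq_natCast_iff _ _ _).mp h1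
      have hm1 : 1 ≤ m * ((p:ℕ)+1) := Nat.one_le_iff_ne_zero.mpr (by positivity)
      have hm2 : 1 ≤ m * (v+(p:ℕ)+1) := Nat.one_le_iff_ne_zero.mpr (by positivity)
      have heq1 : (m * ((t+2)*(t+3)/2) - (t+2)) + (m*((p:ℕ)+1) - 1)
          = σ + (m*(v+(p:ℕ)+1) - 1) := by
        have h4 : m*(v+(p:ℕ)+1) = m*v + m*((p:ℕ)+1) := by ring
        omega
      have hmod3 : (v+(p:ℕ)+1) ≡ ((v + (p:ℕ)) % (t+3) + 1) [MOD (t+3)] :=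
        Nat.ModEq.add_right 1 (Nat.mod_modEq _ _).symm
      have hmod4 : m*(v+(p:ℕ)+1) ≡ m*((v + (p:ℕ)) % (t+3) + 1) [MOD m*(t+3)] :=
        hmod3.mul_left' m
      have hmod5 : (m*(v+(p:ℕ)+1) - 1) ≡ (m * ((v + (p:ℕ)) % (t+3) + 1) - 1)
          [MOD m*(t+3)] := by
        have h3 : 1 ≤ m * ((v + (p:ℕ)) % (t+3) + 1) :=
          Nat.one_le_iff_ne_zero.mpr (by positivity)
        have e1 : m*(v+(p:ℕ)+1) = (m*(v+(p:ℕ)+1) - 1) + 1 := by omega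
        have e2 : m*((v + (p:ℕ)) % (t+3) + 1) = (m * ((v + (p:ℕ)) % (t+3) + 1) - 1) + 1 := by
          omega
        rw [e1, e2] at hmod4
        exact Nat.ModEq.add_right_cancel' 1 hmod4
      have hfinal : σ + c p.succ ≡ σ + (m * ((v + (p:ℕ)) % (t+3) + 1) - 1) [MOD m*(t+3)] := by
        calc σ + c p.succ
            ≡ (m * ((t+2)*(t+3)/2) - (t+2)) + (m*((p:ℕ)+1) - 1) [MOD m*(t+3)] := hcong.symm
          _ = σ + (m*(v+(p:ℕ)+1) - 1) := heq1
          _ ≡ σ + (m * ((v + (p:ℕ)) % (t+3) + 1) - 1) [MOD m*(t+3)] :=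
              Nat.ModEq.add_left σ hmod5
      have hcW : c p.succ ≡ (m * ((v + (p:ℕ)) % (t+3) + 1) - 1) [MOD m*(t+3)] :=
        Nat.ModEq.add_left_cancel' σ hfinal
      calc m * ((v + (p:ℕ)) % (t+3) + 1) - 1
          = (m * ((v + (p:ℕ)) % (t+3) + 1) - 1) % (m*(t+3)) := (Nat.mod_eq_of_lt hWlt).symm
        _ = c p.succ % (m*(t+3)) := hcW.symm
        _ ≤ c p.succ := Nat.mod_le _ _
    -- sum them up
    have hsum1 : ∑ p : Fin (t+1), (m * ((v + (p:ℕ)) % (t+3) + 1) - 1) ≤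
        ∑ p : Fin (t+1), c p.succ := Finset.sum_le_sum (fun p _ => hclow p)
    have hsplitσ : σ = c 0 + ∑ p : Fin (t+1), c p.succ := by
      rw [hσ]; exact Fin.sum_univ_succ c
    have hsum2 : ∑ p : Fin (t+1), c p.succ ≤ σ := by omega
    have hsum3 : ∑ p : Fin (t+1), (m * ((v + (p:ℕ)) % (t+3) + 1) - 1)
        = ∑ p ∈ range (t+1), (m * ((v + p) % (t+3) + 1) - 1) :=
      Fin.sum_univ_eq_sum_range (fun p => m * ((v + p) % (t+3) + 1) - 1) (t+1)
    have hLA := lower_aux t m v hm hv1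
    omega
end
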